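/- arXiv:1110.0423 — 7 statements merged into one kernel-verified Lean document; each statement's English description precedes it below -/
import Mathlib

section
/- Let I = (m_1, ..., m_r) be a monomial ideal in T = K[y_1, y_2] with r ≥ 2, where m_i = y_1^{b_i} y_2^{c_i} are the minimal monomial generators ordered so that b_1 > b_2 > ... > b_r ≥ 0 and 0 ≤ c_1 < c_2 < ... < c_r. Then the Castelnuovo–Mumford regularity of I equals max_{i=1,...,r-1} (b_i + c_{i+1}) − 1. -/
open MvPolynomial

/-- Total degree of a monomial exponent vector. -/
def monTotalDeg {n : ℕ} (m : Fin n →₀ ℕ) : ℕ := m.sum fun _ e => e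

/-- An element `v` of the graded free module `⊕_{k : ι} R(−t k)` over
`R = K[x_1,…,x_n]` is homogeneous of (internal) degree `dg` if every monomial
appearing in the component `v k` has total degree `dg − t k`. -/
def IsHomOfDeg {K : Type} [Field K] {n : ℕ} {ι : Type} (t : ι → ℕ) (dg : ℕ)
    (v : ι →₀ MvPolynomial (Fin n) K) : Prop :=
  ∀ k : ι, ∀ m ∈ (v k).support, monTotalDeg m + t k = dg

/-- A linear map between graded free modules with twists `s`, `t` is graded
(degree-preserving) if it sends homogeneous elements of degree `dg` to
homogeneous elements of degree `dg`. -/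
def IsGradedMap {K : Type} [Field K] {n : ℕ} {ι κ : Type} (s : ι → ℕ) (t : κ → ℕ)
    (f : (ι →₀ MvPolynomial (Fin n) K) →ₗ[MvPolynomial (Fin n) K]
         (κ →₀ MvPolynomial (Fin n) K)) : Prop :=
  ∀ dg v, IsHomOfDeg s dg v → IsHomOfDeg t dg (f v)

/-- `regBound I r` says that the homogeneous ideal `I` admits a finite graded free
resolution `… → F_1 → F_0 → I → 0` in which the `i`-th free module `F_i` is
generated in degrees `≤ r + i`.  For a finitely generated graded module over a
standard graded polynomial ring, the Castelnuovo–Mumford regularity is the least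
`r` with this property (the minimal free resolution attains it). -/
def regBound {K : Type} [Field K] {n : ℕ} (I : Ideal (MvPolynomial (Fin n) K))
    (r : ℕ) : Prop :=
  ∃ (ι : ℕ → Type) (t : ∀ i, ι i → ℕ)
    (f : ∀ i, ((ι (i+1)) →₀ MvPolynomial (Fin n) K) →ₗ[MvPolynomial (Fin n) K]
              ((ι i) →₀ MvPolynomial (Fin n) K))
    (g : ((ι 0) →₀ MvPolynomial (Fin n) K) →ₗ[MvPolynomial (Fin n) K]
         MvPolynomial (Fin n) K),
    (∀ i, Finite (ι i)) ∧
    (∃ N, ∀ i, N ≤ i → IsEmpty (ι i)) ∧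
    (∀ i (k : ι i), t i k ≤ r + i) ∧
    (∀ i, IsGradedMap (t (i+1)) (t i) (f i)) ∧
    (∀ dg v, IsHomOfDeg (t 0) dg v → g v ∈ homogeneousSubmodule (Fin n) K dg) ∧
    (∀ i, LinearMap.range (f (i+1)) = LinearMap.ker (f i)) ∧
    (LinearMap.range (f 0) = LinearMap.ker g) ∧
    (∀ p, p ∈ LinearMap.range g ↔ p ∈ I)

/-- The Castelnuovo–Mumford regularity of a homogeneous ideal, via graded free
resolutions. -/
noncomputable def regIdeal {K : Type} [Field K] {n : ℕ}
    (I : Ideal (MvPolynomial (Fin n) K)) : ℕ :=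
  sInf {r | regBound I r}

section Basic
variable {K : Type} [Field K] {n : ℕ} {ι : Type}

lemma monTotalDeg_eq_degree (m : Fin n →₀ ℕ) : monTotalDeg m = m.degree := rfl

lemma monTotalDeg_add (a b : Fin n →₀ ℕ) :
    monTotalDeg (a + b) = monTotalDeg a + monTotalDeg b := by
  unfold monTotalDeg
  exact Finsupp.sum_add_index' (fun _ => rfl) (fun _ _ _ => rfl)

lemma monTotalDeg_single (i : Fin n) (e : ℕ) : monTotalDeg (Finsupp.single i e) = e := by
  unfold monTotalDeg
  exact Finsupp.sum_single_index rfl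

lemma isHomogeneous_iff_support (p : MvPolynomial (Fin n) K) (d : ℕ) :
    p.IsHomogeneous d ↔ ∀ m ∈ p.support, monTotalDeg m = d := by
  constructor
  · intro h m hm
    rw [monTotalDeg_eq_degree, Finsupp.degree_eq_weight_one]
    exact h (mem_support_iff.mp hm)
  · intro h m hm
    have := h m (mem_support_iff.mpr hm)
    rw [monTotalDeg_eq_degree, Finsupp.degree_eq_weight_one] at this
    exact this
end Basic

section Hcomp
variable {K : Type} [Field K] {n : ℕ} {ι : Type} [Fintype ι]

noncomputable def hcomp (t : ι → ℕ) (d : ℕ) (v : ι →₀ MvPolynomial (Fin n) K) :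
    ι →₀ MvPolynomial (Fin n) K :=
  Finsupp.equivFunOnFinite.symm
    (fun k => if t k ≤ d then homogeneousComponent (d - t k) (v k) else 0)

lemma hcomp_apply (t : ι → ℕ) (d : ℕ) (v : ι →₀ MvPolynomial (Fin n) K) (k : ι) :
    hcomp t d v k = if t k ≤ d then homogeneousComponent (d - t k) (v k) else 0 := rfl

lemma hcomp_isHom (t : ι → ℕ) (d : ℕ) (v : ι →₀ MvPolynomial (Fin n) K) :
    IsHomOfDeg t d (hcomp t d v) := by
  intro k m hm
  rw [hcomp_apply] at hm
  split at hm
  · next h =>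
    have := (homogeneousComponent_isHomogeneous (d - t k) (v k))
    rw [isHomogeneous_iff_support] at this
    rw [this m hm]
    omega
  · simp at hm

lemma hcomp_sum (t : ι → ℕ) (d : ℕ) {α : Type*} (s : Finset α)
    (w : α → (ι →₀ MvPolynomial (Fin n) K)) :
    hcomp t d (∑ a ∈ s, w a) = ∑ a ∈ s, hcomp t d (w a) := by
  ext k
  rw [Finset.sum_apply', hcomp_apply, Finset.sum_apply']
  split
  · next h => simp only [hcomp_apply, if_pos h]; rw [map_sum]
  · next h => simp only [hcomp_apply, if_neg h, Finset.sum_const_zero]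

lemma hcomp_of_isHom {t : ι → ℕ} {D : ℕ} {z : ι →₀ MvPolynomial (Fin n) K}
    (h : IsHomOfDeg t D z) : hcomp t D z = z := by
  ext k
  rw [hcomp_apply]
  by_cases hz : z k = 0
  · simp [hz]
  · obtain ⟨m, hm⟩ := MvPolynomial.support_nonempty.mpr hz
    have htk : t k ≤ D := by have := h k m hm; omega
    rw [if_pos htk]
    have hmem : z k ∈ homogeneousSubmodule (Fin n) K (D - t k) := by
      rw [mem_homogeneousSubmodule, isHomogeneous_iff_support]
      intro m' hm'
      have := h k m' hm'; omega
    rw [homogeneousComponent_of_mem hmem, if_pos rfl]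

lemma hcomp_of_isHom_ne {t : ι → ℕ} {D d : ℕ} {z : ι →₀ MvPolynomial (Fin n) K}
    (h : IsHomOfDeg t d z) (hne : D ≠ d) : hcomp t D z = 0 := by
  ext k
  rw [hcomp_apply]
  by_cases hz : z k = 0
  · simp [hz]
  · obtain ⟨m, hm⟩ := MvPolynomial.support_nonempty.mpr hz
    have htk : t k ≤ d := by have := h k m hm; omega
    have hmem : z k ∈ homogeneousSubmodule (Fin n) K (d - t k) := by
      rw [mem_homogeneousSubmodule, isHomogeneous_iff_support]
      intro m' hm'
      have := h k m' hm'; omega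
    split
    · next hle =>
      rw [homogeneousComponent_of_mem hmem, if_neg (by omega), Finsupp.coe_zero, Pi.zero_apply]
    · simp

lemma sum_hcomp (t : ι → ℕ) (v : ι →₀ MvPolynomial (Fin n) K) {N : ℕ}
    (hN : ∀ k, t k + (v k).totalDegree ≤ N) :
    ∑ d ∈ Finset.range (N + 1), hcomp t d v = v := by
  ext k : 1
  rw [Finset.sum_apply']
  simp only [hcomp_apply]
  rw [Finset.sum_ite, Finset.sum_const_zero, add_zero]
  have hbij : ∑ d ∈ Finset.range (N+1) with t k ≤ d, homogeneousComponent (d - t k) (v k)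
      = ∑ e ∈ Finset.range (N + 1 - t k), homogeneousComponent e (v k) := by
    apply Finset.sum_nbij' (fun d => d - t k) (fun e => e + t k)
    · intro a ha
      simp only [Finset.mem_filter, Finset.mem_range] at ha ⊢
      omega
    · intro a ha
      simp only [Finset.mem_filter, Finset.mem_range] at ha ⊢
      omega
    · intro a ha
      simp only [Finset.mem_filter, Finset.mem_range] at ha
      omega
    · intro a ha
      omega
    · intro a ha; rfl
  rw [hbij]
  have hsub : Finset.range ((v k).totalDegree + 1) ⊆ Finset.range (N + 1 - t k) := by
    apply Finset.range_subset_range.mpr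
    have := hN k; omega
  calc ∑ e ∈ Finset.range (N + 1 - t k), homogeneousComponent e (v k)
      = ∑ e ∈ Finset.range ((v k).totalDegree + 1), homogeneousComponent e (v k) := by
        refine (Finset.sum_subset hsub ?_).symm
        intro x hx hnx
        simp only [Finset.mem_range] at hx hnx
        have hlt : (v k).totalDegree < x := by omega
        exact homogeneousComponent_eq_zero _ _ hlt
    _ = v k := sum_homogeneousComponent _

end Hcomp

section Preimage
variable {K : Type} [Field K] {n : ℕ} {ι κ : Type} [Fintype ι] [Fintype κ]

lemma IsHomOfDeg_sum_bound (t : ι → ℕ) (u : ι →₀ MvPolynomial (Fin n) K) :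
    ∀ k, t k + (u k).totalDegree ≤ ∑ k' : ι, (t k' + (u k').totalDegree) := by
  intro k
  exact Finset.single_le_sum (f := fun k' => t k' + (u k').totalDegree)
    (fun _ _ => Nat.zero_le _) (Finset.mem_univ k)

/-- homogeneous preimage along a graded map between free modules -/
lemma exists_hom_preimage (t : ι → ℕ) (s : κ → ℕ)
    (f : (ι →₀ MvPolynomial (Fin n) K) →ₗ[MvPolynomial (Fin n) K]
         (κ →₀ MvPolynomial (Fin n) K))
    (hf : IsGradedMap t s f) {z : κ →₀ MvPolynomial (Fin n) K} {D : ℕ}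
    (hz : IsHomOfDeg s D z) (hmem : z ∈ LinearMap.range f) :
    ∃ u, IsHomOfDeg t D u ∧ f u = z := by
  obtain ⟨u0, hu0⟩ := hmem
  set N := D + ∑ k' : ι, (t k' + (u0 k').totalDegree) with hNdef
  have hN : ∀ k, t k + (u0 k).totalDegree ≤ N := by
    intro k
    have := IsHomOfDeg_sum_bound t u0 k
    omega
  have hdec : ∑ d ∈ Finset.range (N + 1), hcomp t d u0 = u0 := sum_hcomp t u0 hN
  refine ⟨hcomp t D u0, hcomp_isHom t D u0, ?_⟩
  have hz2 : z = ∑ d ∈ Finset.range (N + 1), f (hcomp t d u0) := by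
    rw [← map_sum, hdec, hu0]
  have : hcomp s D z = ∑ d ∈ Finset.range (N + 1), hcomp s D (f (hcomp t d u0)) := by
    rw [hz2, hcomp_sum]
  rw [hcomp_of_isHom hz] at this
  have heach : ∀ d ∈ Finset.range (N + 1),
      hcomp s D (f (hcomp t d u0)) = if d = D then f (hcomp t D u0) else 0 := by
    intro d _
    by_cases hd : d = D
    · subst hd
      rw [if_pos rfl, hcomp_of_isHom (hf d _ (hcomp_isHom t d u0))]
    · rw [if_neg hd, hcomp_of_isHom_ne (hf d _ (hcomp_isHom t d u0)) (Ne.symm hd)]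
  rw [Finset.sum_congr rfl heach, Finset.sum_ite_eq' (Finset.range (N+1)) D,
    if_pos (Finset.mem_range.mpr (by omega))] at this
  exact this.symm

/-- homogeneous preimage along a graded map to the polynomial ring -/
lemma exists_hom_preimage_poly (t : ι → ℕ)
    (g : (ι →₀ MvPolynomial (Fin n) K) →ₗ[MvPolynomial (Fin n) K] MvPolynomial (Fin n) K)
    (hg : ∀ dg v, IsHomOfDeg t dg v → g v ∈ homogeneousSubmodule (Fin n) K dg)
    {z : MvPolynomial (Fin n) K} {D : ℕ}
    (hz : z ∈ homogeneousSubmodule (Fin n) K D) (hmem : z ∈ LinearMap.range g) :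
    ∃ u, IsHomOfDeg t D u ∧ g u = z := by
  obtain ⟨u0, hu0⟩ := hmem
  set N := D + ∑ k' : ι, (t k' + (u0 k').totalDegree) with hNdef
  have hN : ∀ k, t k + (u0 k).totalDegree ≤ N := by
    intro k
    have := IsHomOfDeg_sum_bound t u0 k
    omega
  have hdec : ∑ d ∈ Finset.range (N + 1), hcomp t d u0 = u0 := sum_hcomp t u0 hN
  refine ⟨hcomp t D u0, hcomp_isHom t D u0, ?_⟩
  have hz2 : z = ∑ d ∈ Finset.range (N + 1), g (hcomp t d u0) := by
    rw [← map_sum, hdec, hu0]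
  have : homogeneousComponent D z
      = ∑ d ∈ Finset.range (N + 1), homogeneousComponent D (g (hcomp t d u0)) := by
    rw [hz2, map_sum]
  rw [homogeneousComponent_of_mem hz, if_pos rfl] at this
  have heach : ∀ d ∈ Finset.range (N + 1),
      homogeneousComponent D (g (hcomp t d u0)) = if d = D then g (hcomp t D u0) else 0 := by
    intro d _
    rw [homogeneousComponent_of_mem (hg d _ (hcomp_isHom t d u0))]
    by_cases hd : d = D
    · subst hd; simp
    · rw [if_neg (Ne.symm hd), if_neg hd]
  rw [Finset.sum_congr rfl heach, Finset.sum_ite_eq' (Finset.range (N+1)) D,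
    if_pos (Finset.mem_range.mpr (by omega))] at this
  exact this.symm

end Preimage

section Res
variable {K : Type} [Field K]

noncomputable def expv {r : ℕ} (b c : Fin r → ℕ) (i : Fin r) : Fin 2 →₀ ℕ :=
  Finsupp.single 0 (b i) + Finsupp.single 1 (c i)

lemma expv_apply0 {r : ℕ} (b c : Fin r → ℕ) (i : Fin r) : expv b c i 0 = b i := by
  simp [expv, Finsupp.single_apply]

lemma expv_apply1 {r : ℕ} (b c : Fin r → ℕ) (i : Fin r) : expv b c i 1 = c i := by
  simp [expv, Finsupp.single_apply]

lemma monTotalDeg_expv {r : ℕ} (b c : Fin r → ℕ) (i : Fin r) :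
    monTotalDeg (expv b c i) = b i + c i := by
  rw [expv, monTotalDeg_add, monTotalDeg_single, monTotalDeg_single]

noncomputable def mgen {r : ℕ} (b c : Fin r → ℕ) (i : Fin r) : MvPolynomial (Fin 2) K :=
  monomial (expv b c i) 1

lemma mgen_eq {r : ℕ} (b c : Fin r → ℕ) (i : Fin r) :
    (X 0 : MvPolynomial (Fin 2) K) ^ b i * X 1 ^ c i = mgen b c i := by
  rw [mgen, expv, X_pow_eq_monomial, X_pow_eq_monomial, monomial_mul, one_mul]

lemma mgen_ne_zero {r : ℕ} (b c : Fin r → ℕ) (i : Fin r) :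
    (mgen b c i : MvPolynomial (Fin 2) K) ≠ 0 := by
  rw [mgen, Ne, MvPolynomial.monomial_eq_zero]
  exact one_ne_zero

def flo {r : ℕ} (j : Fin (r - 1)) : Fin r := Fin.castLE (Nat.sub_le r 1) j

def fhi {r : ℕ} (j : Fin (r - 1)) : Fin r := ⟨j.1 + 1, by have := j.2; omega⟩

lemma flo_val {r : ℕ} (j : Fin (r - 1)) : (flo j).1 = j.1 := rfl
lemma fhi_val {r : ℕ} (j : Fin (r - 1)) : (fhi j).1 = j.1 + 1 := rfl

noncomputable def syz {r : ℕ} (b c : Fin r → ℕ) (j : Fin (r - 1)) :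
    Fin r →₀ MvPolynomial (Fin 2) K :=
  Finsupp.single (flo j) (monomial (Finsupp.single 1 (c (fhi j) - c (flo j))) 1)
    - Finsupp.single (fhi j) (monomial (Finsupp.single 0 (b (flo j) - b (fhi j))) 1)

lemma syz_apply {r : ℕ} (b c : Fin r → ℕ) (j : Fin (r - 1)) (i : Fin r) :
    (syz b c j : Fin r →₀ MvPolynomial (Fin 2) K) i
      = (if flo j = i then monomial (Finsupp.single 1 (c (fhi j) - c (flo j))) 1 else 0)
        - (if fhi j = i then monomial (Finsupp.single 0 (b (flo j) - b (fhi j))) 1 else 0) := by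
  rw [syz, Finsupp.sub_apply, Finsupp.single_apply, Finsupp.single_apply]

noncomputable def gmap {r : ℕ} (b c : Fin r → ℕ) :
    (Fin r →₀ MvPolynomial (Fin 2) K) →ₗ[MvPolynomial (Fin 2) K] MvPolynomial (Fin 2) K :=
  Finsupp.linearCombination _ (mgen b c)

noncomputable def fmap {r : ℕ} (b c : Fin r → ℕ) :
    (Fin (r - 1) →₀ MvPolynomial (Fin 2) K) →ₗ[MvPolynomial (Fin 2) K]
      (Fin r →₀ MvPolynomial (Fin 2) K) :=
  Finsupp.linearCombination _ (syz b c)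

lemma expEq {r : ℕ} {b c : Fin r → ℕ} (hb : StrictAnti b) (hc : StrictMono c)
    (j : Fin (r - 1)) :
    Finsupp.single 1 (c (fhi j) - c (flo j)) + expv b c (flo j)
      = Finsupp.single 0 (b (flo j) - b (fhi j)) + expv b c (fhi j) := by
  have hlt : flo j < fhi j := by rw [Fin.lt_def, flo_val, fhi_val]; omega
  have hcle : c (flo j) ≤ c (fhi j) := (hc hlt).le
  have hble : b (fhi j) ≤ b (flo j) := (hb hlt).le
  ext a
  fin_cases a <;> simp [expv, Finsupp.single_apply] <;> omega

lemma gmap_syz {r : ℕ} {b c : Fin r → ℕ} (hb : StrictAnti b) (hc : StrictMono c)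
    (j : Fin (r - 1)) : (gmap b c : _) ((syz b c j : Fin r →₀ MvPolynomial (Fin 2) K)) = 0 := by
  rw [syz, map_sub, gmap, Finsupp.linearCombination_single, Finsupp.linearCombination_single,
    smul_eq_mul, smul_eq_mul, mgen, mgen, monomial_mul, monomial_mul, one_mul,
    expEq hb hc j, sub_self]

lemma mem_support_mul_monomial {p : MvPolynomial (Fin 2) K} {e m : Fin 2 →₀ ℕ}
    (hm : m ∈ (p * monomial e (1 : K)).support) :
    e ≤ m ∧ (m - e) ∈ p.support ∧ monTotalDeg m = monTotalDeg (m - e) + monTotalDeg e := by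
  rw [mem_support_iff, coeff_mul_monomial'] at hm
  split at hm
  · next hle =>
    refine ⟨hle, mem_support_iff.mpr (by simpa using hm), ?_⟩
    conv_lhs => rw [← tsub_add_cancel_of_le hle]
    rw [monTotalDeg_add]
  · simp at hm

/-- gradedness of `gmap` -/
lemma gmap_graded {r : ℕ} (b c : Fin r → ℕ) (dg : ℕ) (v : Fin r →₀ MvPolynomial (Fin 2) K)
    (hv : IsHomOfDeg (fun i => b i + c i) dg v) :
    (gmap b c) v ∈ homogeneousSubmodule (Fin 2) K dg := by
  rw [mem_homogeneousSubmodule, isHomogeneous_iff_support]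
  intro m hm
  rw [gmap, Finsupp.linearCombination_apply] at hm
  rw [mem_support_iff, Finsupp.sum, coeff_sum] at hm
  obtain ⟨i, _, hco⟩ := Finset.exists_ne_zero_of_sum_ne_zero hm
  have hm' : m ∈ (v i * monomial (expv b c i) (1:K)).support := by
    rw [mem_support_iff]
    simpa [mgen, smul_eq_mul] using hco
  obtain ⟨hle, hsup, hdeg⟩ := mem_support_mul_monomial hm'
  have h2 : monTotalDeg (m - expv b c i) + (b i + c i) = dg := hv i _ hsup
  have h3 : monTotalDeg m = monTotalDeg (m - expv b c i) + (b i + c i) := by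
    rw [hdeg, monTotalDeg_expv]
  omega

/-- gradedness of `fmap` -/
lemma fmap_graded {r : ℕ} {b c : Fin r → ℕ} (hb : StrictAnti b) (hc : StrictMono c) :
    IsGradedMap (fun j : Fin (r-1) => b (flo j) + c (fhi j)) (fun i => b i + c i)
      (fmap b c (K := K)) := by
  intro dg v hv i m hm
  rw [fmap, Finsupp.linearCombination_apply] at hm
  rw [Finsupp.sum_apply] at hm
  rw [mem_support_iff, Finsupp.sum, coeff_sum] at hm
  obtain ⟨j, _, hco⟩ := Finset.exists_ne_zero_of_sum_ne_zero hm
  rw [Finsupp.smul_apply, smul_eq_mul, syz_apply, mul_sub, coeff_sub] at hco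
  have hlf : flo j ≠ fhi j := by
    intro h
    have := congrArg Fin.val h
    rw [flo_val, fhi_val] at this
    omega
  have hlt : flo j < fhi j := by rw [Fin.lt_def, flo_val, fhi_val]; omega
  have hcle : c (flo j) ≤ c (fhi j) := (hc hlt).le
  have hble : b (fhi j) ≤ b (flo j) := (hb hlt).le
  by_cases h1 : flo j = i
  · rw [if_pos h1, if_neg (show ¬ fhi j = i by rw [← h1]; exact fun h => hlf h.symm)] at hco
    simp only [mul_zero, coeff_zero, sub_zero] at hco
    have hm' : m ∈ (v j * monomial (Finsupp.single 1 (c (fhi j) - c (flo j))) (1:K)).support :=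
      mem_support_iff.mpr hco
    obtain ⟨hle, hsup, hdeg⟩ := mem_support_mul_monomial hm'
    have h2 : monTotalDeg (m - Finsupp.single 1 (c (fhi j) - c (flo j)))
        + (b (flo j) + c (fhi j)) = dg := hv j _ hsup
    have h3 : monTotalDeg m = monTotalDeg (m - Finsupp.single 1 (c (fhi j) - c (flo j)))
        + (c (fhi j) - c (flo j)) := by rw [hdeg, monTotalDeg_single]
    subst h1
    show monTotalDeg m + (b (flo j) + c (flo j)) = dg
    omega
  · rw [if_neg h1] at hco
    simp only [mul_zero, coeff_zero, zero_sub, neg_ne_zero] at hco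
    by_cases h2 : fhi j = i
    · rw [if_pos h2] at hco
      have hm' : m ∈ (v j * monomial (Finsupp.single 0 (b (flo j) - b (fhi j))) (1:K)).support :=
        mem_support_iff.mpr hco
      obtain ⟨hle, hsup, hdeg⟩ := mem_support_mul_monomial hm'
      have h2' : monTotalDeg (m - Finsupp.single 0 (b (flo j) - b (fhi j)))
          + (b (flo j) + c (fhi j)) = dg := hv j _ hsup
      have h3 : monTotalDeg m = monTotalDeg (m - Finsupp.single 0 (b (flo j) - b (fhi j)))
          + (b (flo j) - b (fhi j)) := by rw [hdeg, monTotalDeg_single]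
      subst h2
      show monTotalDeg m + (b (fhi j) + c (fhi j)) = dg
      omega
    · rw [if_neg h2] at hco
      simp at hco

lemma syz_mono_ne_zero {r : ℕ} (γ : ℕ) (a : Fin 2) :
    (monomial (Finsupp.single a γ) (1 : K)) ≠ 0 := by
  rw [Ne, MvPolynomial.monomial_eq_zero]
  exact one_ne_zero

lemma fmap_apply_sum {r : ℕ} (b c : Fin r → ℕ) (v : Fin (r-1) →₀ MvPolynomial (Fin 2) K)
    (i : Fin r) :
    ((fmap b c) v) i = ∑ j : Fin (r-1), v j * ((syz b c j : Fin r →₀ MvPolynomial (Fin 2) K) i) := by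
  rw [fmap, Finsupp.linearCombination_apply, Finsupp.sum_apply,
    Finsupp.sum_fintype]
  · apply Finset.sum_congr rfl
    intro j _
    rw [Finsupp.smul_apply, smul_eq_mul]
  · intro j
    rw [Finsupp.smul_apply, zero_smul]

lemma fmap_injective {r : ℕ} (b c : Fin r → ℕ) :
    Function.Injective (fmap b c (K := K)) := by
  rw [injective_iff_map_eq_zero]
  intro v hv
  have key : ∀ N : ℕ, ∀ j : Fin (r-1), j.1 = N → v j = 0 := by
    intro N
    induction N using Nat.strong_induction_on with
    | _ N IH =>
      intro j hj
      have happ : (0 : MvPolynomial (Fin 2) K) = ∑ j' : Fin (r-1),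
          v j' * ((syz b c j' : Fin r →₀ MvPolynomial (Fin 2) K) (flo j)) := by
        rw [← fmap_apply_sum, hv]; rfl
      rw [Finset.sum_eq_single j] at happ
      · rw [syz_apply, if_pos rfl,
          if_neg (show ¬ fhi j = flo j by
            intro h; have := congrArg Fin.val h; rw [fhi_val, flo_val] at this; omega),
          sub_zero] at happ
        rcases mul_eq_zero.mp happ.symm with h | h
        · exact h
        · exact absurd h (syz_mono_ne_zero (r := r) _ _)
      · intro j' _ hne
        by_cases hvz : v j' = 0
        · rw [hvz, zero_mul]
        · rw [syz_apply,
            if_neg (show ¬ flo j' = flo j by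
              intro h; exact hne (Fin.ext (by
                have := congrArg Fin.val h; rw [flo_val, flo_val] at this; exact this)))]
          by_cases hf : fhi j' = flo j
          · exfalso
            have hval := congrArg Fin.val hf
            rw [fhi_val, flo_val] at hval
            have : v j' = 0 := IH j'.1 (by omega) j' rfl
            exact hvz this
          · rw [if_neg hf]; simp
      · intro h
        exact absurd (Finset.mem_univ j) h
  ext j : 1
  exact key j.1 j rfl

lemma exists_div (p : MvPolynomial (Fin 2) K) (e : Fin 2 →₀ ℕ)
    (h : ∀ m ∈ p.support, e ≤ m) : ∃ w, p = monomial e 1 * w := by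
  refine ⟨∑ m ∈ p.support, monomial (m - e) (coeff m p), ?_⟩
  rw [Finset.mul_sum]
  have : ∀ m ∈ p.support, monomial e (1:K) * monomial (m - e) (coeff m p)
      = monomial m (coeff m p) := by
    intro m hm
    rw [monomial_mul, one_mul, add_tsub_cancel_of_le (h m hm)]
  rw [Finset.sum_congr rfl this, support_sum_monomial_coeff]

lemma gmap_apply_sum {r : ℕ} (b c : Fin r → ℕ) (v : Fin r →₀ MvPolynomial (Fin 2) K) :
    (gmap b c) v = ∑ i : Fin r, v i * mgen b c i := by
  rw [gmap, Finsupp.linearCombination_apply, Finsupp.sum_fintype]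
  · exact Finset.sum_congr rfl fun i _ => rfl
  · intro i
    rw [zero_smul]

lemma ker_gmap_aux {r : ℕ} {b c : Fin r → ℕ} (hb : StrictAnti b) (hc : StrictMono c) :
    ∀ k : ℕ, ∀ v : Fin r →₀ MvPolynomial (Fin 2) K, (gmap b c) v = 0 →
      (∀ i : Fin r, (i : ℕ) < r - k → v i = 0) → v ∈ LinearMap.range (fmap b c (K := K)) := by
  intro k
  induction k with
  | zero =>
    intro v _ hz
    have : v = 0 := by
      ext i : 1
      exact hz i (by omega)
    rw [this]
    exact Submodule.zero_mem _
  | succ k IH =>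
    intro v hgv hz
    by_cases hkr : r ≤ k
    · exact IH v hgv (fun i hi => hz i (by omega))
    push_neg at hkr
    set K0 := r - (k + 1) with hK0def
    have hK0 : K0 < r := by omega
    set i0 : Fin r := ⟨K0, hK0⟩ with hi0def
    have hi0v : (i0 : ℕ) = K0 := rfl
    have hsum : ∑ i : Fin r, v i * mgen b c i = 0 := by rw [← gmap_apply_sum, hgv]
    have hfil : ∑ i ∈ Finset.univ.filter (fun i : Fin r => K0 ≤ i.1), v i * mgen b c i = 0 := by
      rw [← hsum]
      apply Finset.sum_subset (Finset.filter_subset _ _)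
      intro i _ hni
      simp only [Finset.mem_filter, Finset.mem_univ, true_and, not_le] at hni
      rw [hz i (by omega), zero_mul]
    have hins : Finset.univ.filter (fun i : Fin r => K0 ≤ i.1)
        = insert i0 (Finset.univ.filter (fun i : Fin r => K0 < i.1)) := by
      ext i
      simp only [Finset.mem_filter, Finset.mem_univ, true_and, Finset.mem_insert]
      constructor
      · intro h
        rcases Nat.eq_or_lt_of_le h with h' | h'
        · exact Or.inl (Fin.ext h'.symm)
        · exact Or.inr h'
      · rintro (rfl | h)
        · exact le_rfl
        · omega
    have hnotmem : i0 ∉ Finset.univ.filter (fun i : Fin r => K0 < i.1) := by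
      simp [hi0def]
    rw [hins, Finset.sum_insert hnotmem] at hfil
    have heq : v i0 * mgen b c i0
        = -∑ i ∈ Finset.univ.filter (fun i : Fin r => K0 < i.1), v i * mgen b c i := by
      linear_combination hfil
    have hmem : v i0 * mgen b c i0 ∈ Ideal.span
        ((fun e => monomial e (1:K)) '' (expv b c '' {i : Fin r | K0 < i.1})) := by
      rw [heq]
      apply Submodule.neg_mem
      apply Ideal.sum_mem
      intro i hi
      simp only [Finset.mem_filter, Finset.mem_univ, true_and] at hi
      exact Ideal.mul_mem_left _ _ (Ideal.subset_span ⟨expv b c i, ⟨i, hi, rfl⟩, rfl⟩)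
    have hsupp := mem_ideal_span_monomial_image.mp hmem
    by_cases hcase : K0 = r - 1
    · -- last index: v i0 must be zero
      have hvi0 : v i0 = 0 := by
        by_contra hne
        have hne' : v i0 * mgen b c i0 ≠ 0 := mul_ne_zero hne (mgen_ne_zero b c i0)
        obtain ⟨μ, hμ⟩ := MvPolynomial.support_nonempty.mpr hne'
        obtain ⟨e, ⟨i, hiS, rfl⟩, _⟩ := hsupp μ hμ
        simp only [Set.mem_setOf_eq] at hiS
        have := i.2
        omega
      have : v = 0 := by
        ext i : 1
        simp only [Finsupp.coe_zero, Pi.zero_apply]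
        by_cases h : (i : ℕ) < K0
        · exact hz i (by omega)
        · have hieq : i = i0 := Fin.ext (by rw [hi0v]; have := i.2; omega)
          rw [hieq, hvi0]
      rw [this]
      exact Submodule.zero_mem _
    · -- general step
      have hK1 : K0 < r - 1 := by omega
      set j0 : Fin (r - 1) := ⟨K0, hK1⟩ with hj0def
      have hj0v : (j0 : ℕ) = K0 := rfl
      have hflv : ((flo j0 : Fin r) : ℕ) = K0 := rfl
      have hfhv : ((fhi j0 : Fin r) : ℕ) = K0 + 1 := rfl
      have hfloj0 : flo j0 = i0 := Fin.ext (by rw [hflv, hi0v])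
      set γ := c (fhi j0) - c (flo j0) with hγdef
      have hdiv : ∀ m ∈ (v i0).support, Finsupp.single 1 γ ≤ m := by
        intro m hm
        have hco : coeff (m + expv b c i0) (v i0 * mgen b c i0) = coeff m (v i0) := by
          rw [mgen, coeff_mul_monomial, mul_one]
        have hμ : (m + expv b c i0) ∈ (v i0 * mgen b c i0).support := by
          rw [mem_support_iff, hco]
          exact mem_support_iff.mp hm
        obtain ⟨e, ⟨i, hiS, rfl⟩, hle⟩ := hsupp _ hμ
        simp only [Set.mem_setOf_eq] at hiS
        have hle1 : expv b c i 1 ≤ (m + expv b c i0) 1 := hle 1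
        rw [expv_apply1, Finsupp.add_apply, expv_apply1] at hle1
        have hci : c (fhi j0) ≤ c i := by
          apply hc.monotone
          rw [Fin.le_def, fhi_val]
          exact hiS
        intro a
        fin_cases a <;> simp [Finsupp.single_apply]
        have hc0 : c (flo j0) = c i0 := by rw [hfloj0]
        omega
      obtain ⟨w, hw⟩ := exists_div (v i0) (Finsupp.single 1 γ) hdiv
      set v' := v - (fmap b c) (Finsupp.single j0 w) with hv'def
      have hfs : (fmap b c) (Finsupp.single j0 w) = w • (syz b c j0 : Fin r →₀ _) := by
        rw [fmap, Finsupp.linearCombination_single]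
      have hv'g : (gmap b c) v' = 0 := by
        rw [hv'def, map_sub, hgv, hfs, map_smul, gmap_syz hb hc, smul_zero, sub_zero]
      have hv'z : ∀ i : Fin r, (i : ℕ) < r - k → v' i = 0 := by
        intro i hi
        have hrk : r - k = K0 + 1 := by omega
        rw [hv'def, Finsupp.sub_apply, hfs, Finsupp.smul_apply, smul_eq_mul, syz_apply]
        by_cases h : (i : ℕ) < K0
        · rw [hz i (by omega),
            if_neg (show ¬ flo j0 = i by
              intro hh; have h2 := congrArg Fin.val hh; rw [hflv] at h2; omega),
            if_neg (show ¬ fhi j0 = i by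
              intro hh; have h2 := congrArg Fin.val hh; rw [hfhv] at h2; omega)]
          simp
        · have hii : i = i0 := Fin.ext (by rw [hi0v]; omega)
          rw [hii, if_pos hfloj0,
            if_neg (show ¬ fhi j0 = i0 by
              intro hh; have h2 := congrArg Fin.val hh; rw [hfhv, hi0v] at h2; omega),
            sub_zero, hw]
          ring
      obtain ⟨q, hq⟩ := IH v' hv'g hv'z
      refine ⟨q + Finsupp.single j0 w, ?_⟩
      rw [map_add, hq, hv'def]
      abel

lemma range_fmap_eq_ker {r : ℕ} {b c : Fin r → ℕ} (hb : StrictAnti b) (hc : StrictMono c) :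
    LinearMap.range (fmap b c (K := K)) = LinearMap.ker (gmap b c) := by
  apply le_antisymm
  · rintro _ ⟨q, rfl⟩
    rw [LinearMap.mem_ker, fmap, Finsupp.linearCombination_apply]
    rw [map_finsuppSum]
    apply Finset.sum_eq_zero
    intro j _
    show (gmap b c) (q j • syz b c j) = 0
    rw [map_smul, gmap_syz hb hc, smul_zero]
  · intro v hv
    exact ker_gmap_aux hb hc r v (LinearMap.mem_ker.mp hv) (fun i hi => by omega)

lemma range_gmap {r : ℕ} (b c : Fin r → ℕ) :
    LinearMap.range (gmap b c (K := K)) = Ideal.span (Set.range (mgen b c (K := K))) := by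
  rw [gmap, Finsupp.range_linearCombination]

end Res

section Lower
variable {K : Type} [Field K]

lemma monTotalDeg_zero {n : ℕ} : monTotalDeg (0 : Fin n →₀ ℕ) = 0 := rfl

lemma IsHomOfDeg.sub {ι : Type} {t : ι → ℕ} {d : ℕ}
    {v w : ι →₀ MvPolynomial (Fin 2) K}
    (hv : IsHomOfDeg t d v) (hw : IsHomOfDeg t d w) : IsHomOfDeg t d (v - w) := by
  intro k m hm
  rw [Finsupp.sub_apply, mem_support_iff, coeff_sub] at hm
  by_cases h : coeff m (v k) ≠ 0
  · exact hv k m (mem_support_iff.mpr h)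
  · push_neg at h
    rw [h, zero_sub, neg_ne_zero] at hm
    exact hw k m (mem_support_iff.mpr hm)

lemma IsHomOfDeg.smul_mono {ι : Type} {t : ι → ℕ} {d : ℕ}
    {v : ι →₀ MvPolynomial (Fin 2) K} (e : Fin 2 →₀ ℕ)
    (hv : IsHomOfDeg t d v) : IsHomOfDeg t (monTotalDeg e + d) (monomial e (1:K) • v) := by
  intro k m hm
  rw [Finsupp.smul_apply, smul_eq_mul, mul_comm] at hm
  obtain ⟨hle, hsup, hdeg⟩ := mem_support_mul_monomial hm
  have := hv k _ hsup
  omega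

set_option maxHeartbeats 2000000 in
lemma reg_lower_bound {r : ℕ} {b c : Fin r → ℕ} (hr : 2 ≤ r)
    (hb : StrictAnti b) (hc : StrictMono c) {M : ℕ}
    (h1 : ∀ j : Fin (r - 1), b (flo j) + c (fhi j) ≤ M)
    (h2 : ∃ j : Fin (r - 1), b (flo j) + c (fhi j) = M)
    {x : ℕ}
    (hex : ∃ (ι : ℕ → Type) (t : ∀ i, ι i → ℕ)
      (f : ∀ i, ((ι (i+1)) →₀ MvPolynomial (Fin 2) K) →ₗ[MvPolynomial (Fin 2) K]
                ((ι i) →₀ MvPolynomial (Fin 2) K))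
      (g : ((ι 0) →₀ MvPolynomial (Fin 2) K) →ₗ[MvPolynomial (Fin 2) K]
           MvPolynomial (Fin 2) K),
      (∀ i, Finite (ι i)) ∧
      (∃ N, ∀ i, N ≤ i → IsEmpty (ι i)) ∧
      (∀ i (k : ι i), t i k ≤ x + i) ∧
      (∀ i, IsGradedMap (t (i+1)) (t i) (f i)) ∧
      (∀ dg v, IsHomOfDeg (t 0) dg v → g v ∈ homogeneousSubmodule (Fin 2) K dg) ∧
      (∀ i, LinearMap.range (f (i+1)) = LinearMap.ker (f i)) ∧
      (LinearMap.range (f 0) = LinearMap.ker g) ∧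
      (∀ p, p ∈ LinearMap.range g ↔ p ∈ Ideal.span (Set.range (mgen b c (K := K))))) :
    M - 1 ≤ x := by
  classical
  by_contra hcon
  push_neg at hcon
  obtain ⟨j0, hj0⟩ := h2
  have hγpos : 0 < c (fhi j0) - c (flo j0) := by
    have : c (flo j0) < c (fhi j0) := hc (by rw [Fin.lt_def, flo_val, fhi_val]; omega)
    omega
  have hβpos : 0 < b (flo j0) - b (fhi j0) := by
    have : b (fhi j0) < b (flo j0) := hb (by rw [Fin.lt_def, flo_val, fhi_val]; omega)
    omega
  have hxM : x + 2 ≤ M := by omega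
  obtain ⟨ι, t, f, g, hfin, _, hbound, hgradf, hgradg, _, hexact0, hrangeIff⟩ := hex
  haveI : Fintype (ι 0) := Fintype.ofFinite _
  haveI : Fintype (ι 1) := Fintype.ofFinite _
  -- homogeneous preimages of the generators
  have hu : ∀ i : Fin r, ∃ u : ι 0 →₀ MvPolynomial (Fin 2) K,
      IsHomOfDeg (t 0) (b i + c i) u ∧ g u = mgen b c i := by
    intro i
    apply exists_hom_preimage_poly (t 0) g hgradg
    · rw [mem_homogeneousSubmodule, isHomogeneous_iff_support]
      intro m hm
      rw [mgen, support_monomial, if_neg (one_ne_zero (α := K))] at hm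
      rw [Finset.mem_singleton] at hm
      rw [hm, monTotalDeg_expv]
    · exact (hrangeIff _).mpr (Ideal.subset_span ⟨i, rfl⟩)
  choose u hu1 hu2 using hu
  set mono2 : MvPolynomial (Fin 2) K :=
    monomial (Finsupp.single 1 (c (fhi j0) - c (flo j0))) 1 with hmono2
  set mono1 : MvPolynomial (Fin 2) K :=
    monomial (Finsupp.single 0 (b (flo j0) - b (fhi j0))) 1 with hmono1
  set z := mono2 • u (flo j0) - mono1 • u (fhi j0) with hzdef
  have hzHom : IsHomOfDeg (t 0) M z := by
    have hA := (hu1 (flo j0)).smul_mono (Finsupp.single 1 (c (fhi j0) - c (flo j0)))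
    have hB := (hu1 (fhi j0)).smul_mono (Finsupp.single 0 (b (flo j0) - b (fhi j0)))
    rw [monTotalDeg_single] at hA hB
    have hcle : c (flo j0) ≤ c (fhi j0) := by omega
    have hble : b (fhi j0) ≤ b (flo j0) := by omega
    have hDA : c (fhi j0) - c (flo j0) + (b (flo j0) + c (flo j0)) = M := by omega
    have hDB : b (flo j0) - b (fhi j0) + (b (fhi j0) + c (fhi j0)) = M := by omega
    rw [hDA] at hA
    rw [hDB] at hB
    exact hA.sub hB
  have hzker : g z = 0 := by
    rw [hzdef, map_sub, map_smul, map_smul, hu2, hu2, smul_eq_mul, smul_eq_mul,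
      hmono2, hmono1, mgen, mgen, monomial_mul, monomial_mul, one_mul,
      expEq hb hc j0, sub_self]
  have hzrange : z ∈ LinearMap.range (f 0) := by
    rw [hexact0, LinearMap.mem_ker]
    exact hzker
  obtain ⟨W, hW1, hW2⟩ := exists_hom_preimage (t 1) (t 0) (f 0) (hgradf 0) hzHom hzrange
  -- comparison maps back to the explicit resolution
  have hpsi0 : ∀ k : ι 0, ∃ p : Fin r →₀ MvPolynomial (Fin 2) K,
      (gmap b c) p = g (Finsupp.single k 1) := by
    intro k
    have : g (Finsupp.single k 1) ∈ LinearMap.range (gmap b c (K := K)) := by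
      rw [range_gmap]
      exact (hrangeIff _).mp ⟨Finsupp.single k 1, rfl⟩
    exact this
  choose ψ0v hψ0v using hpsi0
  set ψ0 := Finsupp.linearCombination (MvPolynomial (Fin 2) K) ψ0v with hψ0def
  have hψ0 : ∀ w, (gmap b c) (ψ0 w) = g w := by
    intro w
    have : (gmap b c).comp ψ0 = g := by
      apply Finsupp.lhom_ext
      intro a m
      rw [LinearMap.comp_apply, hψ0def, Finsupp.linearCombination_single, map_smul, hψ0v,
        ← map_smul, Finsupp.smul_single', mul_one]
    exact LinearMap.congr_fun this w
  have hpsi1 : ∀ k : ι 1, ∃ q : Fin (r-1) →₀ MvPolynomial (Fin 2) K,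
      (fmap b c) q = ψ0 (f 0 (Finsupp.single k 1)) := by
    intro k
    have hker : ψ0 (f 0 (Finsupp.single k 1)) ∈ LinearMap.ker (gmap b c (K := K)) := by
      rw [LinearMap.mem_ker, hψ0]
      have : f 0 (Finsupp.single k 1) ∈ LinearMap.range (f 0) := ⟨_, rfl⟩
      rw [hexact0, LinearMap.mem_ker] at this
      exact this
    rw [← range_fmap_eq_ker hb hc] at hker
    exact hker
  choose ψ1v hψ1v using hpsi1
  set ψ1 := Finsupp.linearCombination (MvPolynomial (Fin 2) K) ψ1v with hψ1def
  have hψ1 : ∀ w, (fmap b c) (ψ1 w) = ψ0 (f 0 w) := by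
    intro w
    have : (fmap b c).comp ψ1 = ψ0.comp (f 0) := by
      apply Finsupp.lhom_ext
      intro a m
      rw [LinearMap.comp_apply, LinearMap.comp_apply, hψ1def,
        Finsupp.linearCombination_single, map_smul, hψ1v, ← map_smul, ← map_smul,
        Finsupp.smul_single', mul_one]
    exact LinearMap.congr_fun this w
  -- homotopy-style correction terms
  have hh0 : ∀ i : Fin r, ∃ h : Fin (r-1) →₀ MvPolynomial (Fin 2) K,
      (fmap b c) h = ψ0 (u i) - Finsupp.single i 1 := by
    intro i
    have hker : ψ0 (u i) - Finsupp.single i 1 ∈ LinearMap.ker (gmap b c (K := K)) := by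
      rw [LinearMap.mem_ker, map_sub, hψ0, hu2, gmap, Finsupp.linearCombination_single,
        one_smul, sub_self]
    rw [← range_fmap_eq_ker hb hc] at hker
    exact hker
  choose hh hhh using hh0
  -- main identity
  have e1 : ψ0 (u (flo j0)) = (fmap b c) (hh (flo j0)) + Finsupp.single (flo j0) 1 := by
    rw [hhh (flo j0)]; abel
  have e2 : ψ0 (u (fhi j0)) = (fmap b c) (hh (fhi j0)) + Finsupp.single (fhi j0) 1 := by
    rw [hhh (fhi j0)]; abel
  have hsyz : (syz b c j0 : Fin r →₀ MvPolynomial (Fin 2) K)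
      = mono2 • Finsupp.single (flo j0) 1 - mono1 • Finsupp.single (fhi j0) 1 := by
    rw [syz, Finsupp.smul_single', Finsupp.smul_single', mul_one, mul_one]
  have hfmap_single : (fmap b c) (Finsupp.single j0 (1 : MvPolynomial (Fin 2) K))
      = syz b c j0 := by
    rw [fmap, Finsupp.linearCombination_single, one_smul]
  have hmain : (fmap b c) (ψ1 W)
      = (fmap b c) (Finsupp.single j0 1 + (mono2 • hh (flo j0) - mono1 • hh (fhi j0))) := by
    have lhs1 : (fmap b c) (ψ1 W) = ψ0 z := by rw [hψ1 W, hW2]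
    have lhs2 : ψ0 z = mono2 • ψ0 (u (flo j0)) - mono1 • ψ0 (u (fhi j0)) := by
      rw [hzdef, map_sub, map_smul, map_smul]
    have rhs1 : (fmap b c) (Finsupp.single j0 1 + (mono2 • hh (flo j0) - mono1 • hh (fhi j0)))
        = syz b c j0 + (mono2 • (fmap b c) (hh (flo j0)) - mono1 • (fmap b c) (hh (fhi j0))) := by
      rw [map_add, map_sub, map_smul, map_smul, hfmap_single]
    rw [lhs1, lhs2, rhs1, e1, e2, hsyz, smul_add, smul_add]
    abel
  have hinj := fmap_injective b c hmain
  -- evaluate the constant coefficient at position j0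
  have happ := congrArg (fun vv : Fin (r-1) →₀ MvPolynomial (Fin 2) K => coeff 0 (vv j0)) hinj
  -- RHS equals 1
  have hco_mono2 : ∀ p : MvPolynomial (Fin 2) K, coeff 0 (mono2 * p) = 0 := by
    intro p
    rw [hmono2, coeff_monomial_mul']
    rw [if_neg]
    intro hle
    have := hle 1
    simp [Finsupp.single_apply] at this
    omega
  have hco_mono1 : ∀ p : MvPolynomial (Fin 2) K, coeff 0 (mono1 * p) = 0 := by
    intro p
    rw [hmono1, coeff_monomial_mul']
    rw [if_neg]
    intro hle
    have := hle 0
    simp [Finsupp.single_apply] at this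
    omega
  have hRHS : coeff 0 (((Finsupp.single j0 (1 : MvPolynomial (Fin 2) K)
      + (mono2 • hh (flo j0) - mono1 • hh (fhi j0)))) j0) = 1 := by
    rw [Finsupp.add_apply, Finsupp.sub_apply, Finsupp.smul_apply, Finsupp.smul_apply,
      Finsupp.single_eq_same, smul_eq_mul, smul_eq_mul, coeff_add, coeff_sub,
      hco_mono2, hco_mono1, coeff_zero_one]
    ring
  -- LHS equals 0
  have hLHS : coeff 0 ((ψ1 W) j0) = 0 := by
    rw [hψ1def, Finsupp.linearCombination_apply, Finsupp.sum_apply, Finsupp.sum, coeff_sum]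
    apply Finset.sum_eq_zero
    intro k hk
    rw [Finsupp.smul_apply, smul_eq_mul]
    have hWk : coeff 0 (W k) = 0 := by
      by_contra hne
      have hmem : (0 : Fin 2 →₀ ℕ) ∈ (W k).support := mem_support_iff.mpr hne
      have := hW1 k 0 hmem
      rw [monTotalDeg_zero] at this
      have hbk := hbound 1 k
      omega
    have : constantCoeff (W k * ψ1v k j0) = constantCoeff (W k) * constantCoeff (ψ1v k j0) :=
      map_mul _ _ _
    rw [constantCoeff_eq] at this
    rw [this, hWk, zero_mul]
  rw [hLHS, hRHS] at happ
  exact one_ne_zero happ.symm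
end Lower

section Upper
variable {K : Type} [Field K]

lemma t0_le {r : ℕ} {b c : Fin r → ℕ} (hr : 2 ≤ r) (hb : StrictAnti b) (hc : StrictMono c)
    {M : ℕ} (h1 : ∀ j : Fin (r - 1), b (flo j) + c (fhi j) ≤ M) :
    ∀ i : Fin r, b i + c i ≤ M - 1 := by
  intro i
  by_cases hir : (i : ℕ) < r - 1
  · set j : Fin (r - 1) := ⟨i.1, hir⟩ with hjdef
    have hflo : flo j = i := Fin.ext rfl
    have hfhiv : ((fhi j : Fin r) : ℕ) = (i : ℕ) + 1 := rfl
    have hlt : c i < c (fhi j) := by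
      apply hc
      rw [Fin.lt_def, hfhiv]
      omega
    have := h1 j
    rw [hflo] at this
    omega
  · have hieq : (i : ℕ) = r - 1 := by have := i.2; omega
    set j : Fin (r - 1) := ⟨r - 2, by omega⟩ with hjdef
    have hfhi : fhi j = i := Fin.ext (by show r - 2 + 1 = (i : ℕ); omega)
    have hflov : ((flo j : Fin r) : ℕ) = r - 2 := rfl
    have hblt : b i < b (flo j) := by
      apply hb
      rw [Fin.lt_def, hflov]
      omega
    have := h1 j
    rw [hfhi] at this
    omega

instance pemptyFinsuppSubsingleton : Subsingleton (PEmpty →₀ MvPolynomial (Fin 2) K) :=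
  ⟨fun a b => Finsupp.ext fun x => x.elim⟩

lemma reg_upper_bound {r : ℕ} {b c : Fin r → ℕ} (hr : 2 ≤ r)
    (hb : StrictAnti b) (hc : StrictMono c) {M : ℕ}
    (h1 : ∀ j : Fin (r - 1), b (flo j) + c (fhi j) ≤ M) (hM1 : 1 ≤ M) :
    regBound (Ideal.span (Set.range (mgen b c (K := K)))) (M - 1) := by
  have ht0 := t0_le hr hb hc h1
  refine ⟨fun i => match i with | 0 => Fin r | 1 => Fin (r-1) | _+2 => PEmpty,
    fun i => match i with
      | 0 => fun i => b i + c i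
      | 1 => fun j => b (flo j) + c (fhi j)
      | _+2 => fun _ => 0,
    fun i => match i with | 0 => fmap b c | _+1 => 0,
    gmap b c, ?_, ?_, ?_, ?_, ?_, ?_, ?_, ?_⟩
  · intro i
    rcases i with _ | _ | i
    · exact Finite.of_fintype _
    · exact Finite.of_fintype _
    · exact inferInstance
  · refine ⟨2, ?_⟩
    intro i hi
    rcases i with _ | _ | i
    · omega
    · omega
    · exact inferInstance
  · intro i k
    rcases i with _ | _ | i
    · show b k + c k ≤ M - 1 + 0
      have := ht0 k
      omega
    · show b (flo k) + c (fhi k) ≤ M - 1 + 1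
      have := h1 k
      omega
    · exact k.elim
  · intro i
    rcases i with _ | i
    · exact fmap_graded hb hc
    · intro dg v hv k m hm
      simp only [LinearMap.zero_apply, Finsupp.coe_zero, Pi.zero_apply] at hm
      simp at hm
  · exact gmap_graded b c
  · intro i
    rcases i with _ | i
    · have h1' : LinearMap.range
          ((0 : (PEmpty →₀ MvPolynomial (Fin 2) K) →ₗ[MvPolynomial (Fin 2) K]
            (Fin (r-1) →₀ MvPolynomial (Fin 2) K))) = ⊥ := LinearMap.range_zero
      have h2' : LinearMap.ker (fmap b c (K := K)) = ⊥ :=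
        LinearMap.ker_eq_bot.mpr (fmap_injective b c)
      exact h1'.trans h2'.symm
    · -- both modules over a subsingleton domain
      apply Submodule.ext
      intro v
      have : v = 0 := Subsingleton.elim _ _
      subst this
      simp
  · exact range_fmap_eq_ker hb hc
  · intro p
    rw [range_gmap]

end Upper

/-- for a monomial ideal `I = (y_1^{b_1}y_2^{c_1}, …, y_1^{b_r}y_2^{c_r})`
in `K[y_1,y_2]` with `r ≥ 2`, `b_1 > … > b_r ≥ 0`, `0 ≤ c_1 < … < c_r`
(the minimal monomial generators in lexicographic order),
`reg I = max_{i=1,…,r−1} (b_i + c_{i+1}) − 1`. -/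
theorem reg_monomial_ideal_two_vars {K : Type} [Field K] (r : ℕ) (hr : 2 ≤ r)
    (b c : Fin r → ℕ) (hb : StrictAnti b) (hc : StrictMono c) :
    regIdeal (Ideal.span
        (Set.range fun i : Fin r => (X 0 : MvPolynomial (Fin 2) K) ^ b i * X 1 ^ c i))
      = (Finset.univ.sup' ⟨(⟨0, by omega⟩ : Fin (r-1)), Finset.mem_univ _⟩
          (fun i : Fin (r-1) => b (i.castLE (Nat.sub_le r 1))
            + c ⟨i.1 + 1, by have := i.2; omega⟩)) - 1 := by
  have hgen : (fun i : Fin r => (X 0 : MvPolynomial (Fin 2) K) ^ b i * X 1 ^ c i)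
      = mgen b c := funext (mgen_eq b c)
  rw [hgen]
  have hne : (Finset.univ : Finset (Fin (r-1))).Nonempty :=
    ⟨⟨0, by omega⟩, Finset.mem_univ _⟩
  show regIdeal (Ideal.span (Set.range (mgen b c)))
      = Finset.univ.sup' hne (fun j : Fin (r-1) => b (flo j) + c (fhi j)) - 1
  set M := Finset.univ.sup' hne (fun j : Fin (r-1) => b (flo j) + c (fhi j)) with hM
  have h1 : ∀ j : Fin (r-1), b (flo j) + c (fhi j) ≤ M := by
    intro j
    rw [hM]
    exact Finset.le_sup' (fun j : Fin (r-1) => b (flo j) + c (fhi j)) (Finset.mem_univ j)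
  have h2 : ∃ j : Fin (r-1), b (flo j) + c (fhi j) = M := by
    obtain ⟨j, _, hj⟩ := Finset.exists_mem_eq_sup' hne
      (fun j : Fin (r-1) => b (flo j) + c (fhi j))
    refine ⟨j, ?_⟩
    rw [hM]
    exact hj.symm
  have hM1 : 1 ≤ M := by
    obtain ⟨j, hj⟩ := h2
    have hlt : c (flo j) < c (fhi j) := hc (by rw [Fin.lt_def, flo_val, fhi_val]; omega)
    omega
  have hup := reg_upper_bound (K := K) hr hb hc h1 hM1
  show sInf {y | regBound (Ideal.span (Set.range (mgen b c))) y} = M - 1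
  apply le_antisymm
  · exact Nat.sInf_le hup
  · have hnonempty : {y | regBound (Ideal.span (Set.range (mgen b c))) y}.Nonempty :=
      ⟨M - 1, hup⟩
    apply le_csInf hnonempty
    intro y hy
    exact reg_lower_bound hr hb hc h1 h2 hy
end

section
/- Let B be a homogeneous simplicial affine semigroup generated by e_1,...,e_d and a_1,...,a_c in M_{d,α}, let A be the submonoid generated by e_1,...,e_d, and let B_A = { x ∈ B : x − a ∉ B for all nonzero a ∈ A }. If x ∈ B_A \ {0} and λ = (b_1,...,b_n) is a sequence with *-property of x, then x(λ,i) ∈ B_A for all i = 0,...,n. -/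
open scoped Classical

def eVec (d α : ℕ) (i : Fin d) : Fin d → ℕ := fun j => if j = i then α else 0

def genSet (d α c : ℕ) (a : Fin c → Fin d → ℕ) : Set (Fin d → ℕ) :=
  Set.range (eVec d α) ∪ Set.range a

def Bmon (d α c : ℕ) (a : Fin c → Fin d → ℕ) : AddSubmonoid (Fin d → ℕ) :=
  AddSubmonoid.closure (genSet d α c a)

def Amon (d α : ℕ) : AddSubmonoid (Fin d → ℕ) :=
  AddSubmonoid.closure (Set.range (eVec d α))

def BAset (d α c : ℕ) (a : Fin c → Fin d → ℕ) : Set (Fin d → ℕ) :=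
  {x | x ∈ Bmon d α c a ∧ ∀ y ∈ Amon d α, y ≠ 0 → ∀ z ∈ Bmon d α c a, z + y ≠ x}

def equivA (α : ℕ) {d : ℕ} (x y : Fin d → ℕ) : Prop :=
  ∀ i, (α : ℤ) ∣ (x i : ℤ) - (y i : ℤ)

def degv (α : ℕ) {d : ℕ} (x : Fin d → ℕ) : ℕ := (∑ i, x i) / α

def pval {d : ℕ} (x : Fin d → ℕ) (L : List (Fin d → ℕ)) (i : ℕ) : Fin d → ℕ :=
  x - (L.take i).sum

def starSeq (d α c : ℕ) (a : Fin c → Fin d → ℕ) (x : Fin d → ℕ)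
    (L : List (Fin d → ℕ)) : Prop :=
  (∀ b ∈ L, b ∈ genSet d α c a) ∧
  ∀ i ≤ L.length, ∃ y ∈ Bmon d α c a, y + (L.take i).sum = x

def Lam (d α c : ℕ) (a : Fin c → Fin d → ℕ) (x : Fin d → ℕ) :
    Set (List (Fin d → ℕ)) :=
  {L | starSeq d α c a x L ∧ L.length = degv α x}

noncomputable def DeltaF (α : ℕ) {d : ℕ} (x y : Fin d → ℕ)
    (L M : List (Fin d → ℕ)) : Finset (ℕ × ℕ) :=
  (Finset.range (L.length + 1) ×ˢ Finset.range (M.length + 1)).filter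
    (fun p => equivA α (pval x L p.1) (pval y M p.2))

def hmin {d : ℕ} (x y : Fin d → ℕ) : Fin d → ℕ := fun i => min (x i) (y i)

def crossless (α : ℕ) {d : ℕ} (x y : Fin d → ℕ) (L M : List (Fin d → ℕ)) : Prop :=
  ∀ p ∈ DeltaF α x y L M, ∀ q ∈ DeltaF α x y L M, p ≤ q ∨ q ≤ p

def isCross (α : ℕ) {d : ℕ} (x y : Fin d → ℕ) (L M : List (Fin d → ℕ))
    (i j l k : ℕ) : Prop :=
  i < j ∧ j ≤ L.length ∧ l < k ∧ k ≤ M.length ∧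
  equivA α (pval x L i) (pval y M k) ∧ equivA α (pval x L j) (pval y M l)

noncomputable def deltaMin (d α c : ℕ) (a : Fin c → Fin d → ℕ)
    (x y : Fin d → ℕ) : ℕ :=
  sInf {n | ∃ L ∈ Lam d α c a x, ∃ M ∈ Lam d α c a y,
    n + 2 = (DeltaF α x y L M).card}

def eqvSetoid (α : ℕ) {d : ℕ} (S : Set (Fin d → ℕ)) : Setoid S where
  r x y := equivA α x.1 y.1
  iseqv := by
    refine ⟨fun x i => ?_, fun {x y} h i => ?_, fun {x y z} h1 h2 i => ?_⟩
    · simp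
    · exact dvd_sub_comm.mp (h i)
    · have := dvd_add (h1 i) (h2 i)
      simpa [sub_add_sub_cancel] using this

noncomputable def numClasses (d α c : ℕ) (a : Fin c → Fin d → ℕ) : ℕ :=
  Nat.card (Quotient (eqvSetoid α (BAset d α c a)))

/-- if `x ∈ B_A \ {0}` and `λ` is a sequence with *-property of `x`,
then all partial values `x(λ,i)` lie in `B_A`. -/
theorem starSeq_pval_mem_BA (d α c : ℕ) (hd : 0 < d) (hα : 0 < α) (hc : 0 < c)
    (a : Fin c → Fin d → ℕ) (ha : ∀ i, ∑ j, a i j = α)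
    (x : Fin d → ℕ) (hx : x ∈ BAset d α c a) (hx0 : x ≠ 0)
    (L : List (Fin d → ℕ)) (hL : starSeq d α c a x L) :
    ∀ i ≤ L.length, pval x L i ∈ BAset d α c a := by
  intro i hi
  obtain ⟨hgen, hstar⟩ := hL
  obtain ⟨y, hy, hyx⟩ := hstar i hi
  have hs : (L.take i).sum ∈ Bmon d α c a := by
    apply AddSubmonoid.list_sum_mem
    intro b hb
    exact AddSubmonoid.subset_closure (hgen b (List.mem_of_mem_take hb))
  have hpv : pval x L i = y := by
    funext j
    simp [pval, ← hyx]
  rw [hpv]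
  refine ⟨hy, ?_⟩
  intro w hw hw0 z hz hzw
  exact hx.2 w hw hw0 (z + (L.take i).sum) (add_mem hz hs)
    (by rw [← hyx, ← hzw]; abel)
end

section
/- With notation as above, if x ∈ B_A \ {0} and λ = (b_1,...,b_n) is a sequence with *-property of x, then x(λ,i) and x(λ,j) are inequivalent modulo G(A) = αℤ^d for all 0 ≤ i < j ≤ n; that is, x(λ,i) − x(λ,j) ∉ αℤ^d. -/
open scoped Classical

/-- if `x ∈ B_A \ {0}` and `λ` is a sequence with *-property of `x`,
then the partial values `x(λ,i)`, `x(λ,j)` for `0 ≤ i < j ≤ n` are pairwise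
inequivalent modulo `G(A) = αℤ^d`. -/
theorem starSeq_pval_not_equiv (d α c : ℕ) (hd : 0 < d) (hα : 0 < α) (hc : 0 < c)
    (a : Fin c → Fin d → ℕ) (ha : ∀ i, ∑ j, a i j = α)
    (x : Fin d → ℕ) (hx : x ∈ BAset d α c a) (hx0 : x ≠ 0)
    (L : List (Fin d → ℕ)) (hL : starSeq d α c a x L) :
    ∀ i j : ℕ, i < j → j ≤ L.length → ¬ equivA α (pval x L i) (pval x L j) := by
  intro i j hij hjn heq
  obtain ⟨hgen, hstar⟩ := hL
  obtain ⟨yi, hyiB, hyi⟩ := hstar i (le_trans hij.le hjn)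
  obtain ⟨yj, hyjB, hyj⟩ := hstar j hjn
  set si := (L.take i).sum with hsi
  set t := ((L.take j).drop i).sum with ht
  have hsplit : (L.take j).sum = si + t := by
    conv_lhs => rw [← List.take_append_drop i (L.take j)]
    rw [List.sum_append, List.take_take, min_eq_left hij.le]
  have hyij : yj + t = yi := by
    have h2 : yj + t + si = yi + si := by
      rw [hyi, ← hyj, hsplit]; abel
    exact add_right_cancel h2
  have hpvi : pval x L i = yi := by
    funext k
    simp only [pval, ← hyi, ← hsi, Pi.sub_apply, Pi.add_apply]
    omega
  have hpvj : pval x L j = yj := by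
    funext k
    simp only [pval, ← hyj, Pi.sub_apply, Pi.add_apply]
    omega
  have hdvd : ∀ k, α ∣ t k := by
    intro k
    have h1 := heq k
    rw [hpvi, hpvj] at h1
    have hk : (yi k : ℤ) - yj k = (t k : ℤ) := by
      rw [← hyij]; push_cast [Pi.add_apply]; ring
    rw [hk] at h1
    exact_mod_cast h1
  -- t is in Amon
  have htA : t ∈ Amon d α := by
    have hrep : t = ∑ k : Fin d, (t k / α) • eVec d α k := by
      funext m
      simp only [Finset.sum_apply, Pi.smul_apply, eVec, smul_eq_mul]
      rw [Finset.sum_eq_single m]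
      · simp [Nat.div_mul_cancel (hdvd m)]
      · intro b _ hb; simp [Ne.symm hb]
      · intro hm; exact absurd (Finset.mem_univ m) hm
    rw [hrep]
    refine AddSubmonoid.sum_mem _ (fun k _ => ?_)
    exact AddSubmonoid.nsmul_mem _ (AddSubmonoid.subset_closure (Set.mem_range_self k)) _
  -- each element of L has coordinate sum α
  have hsumgen : ∀ b ∈ genSet d α c a, ∑ m, b m = α := by
    intro b hb
    rcases hb with ⟨k, rfl⟩ | ⟨k, rfl⟩
    · simp [eVec]
    · exact ha k
  -- t ≠ 0
  have htne : t ≠ 0 := by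
    have hlen : ((L.take j).drop i).length ≠ 0 := by
      simp only [List.length_drop, List.length_take]
      omega
    have hne : (L.take j).drop i ≠ [] := fun h => hlen (by rw [h]; rfl)
    obtain ⟨b, rest, hbr⟩ := List.exists_cons_of_ne_nil hne
    have hbL : b ∈ L := by
      have hb1 : b ∈ (L.take j).drop i := by rw [hbr]; exact List.mem_cons_self
      exact (List.take_sublist j L).mem (List.mem_of_mem_drop hb1)
    have hbα : ∑ m, b m = α := hsumgen b (hgen b hbL)
    have : ∃ m, b m ≠ 0 := by
      by_contra hall
      push_neg at hall
      have : ∑ m, b m = 0 := Finset.sum_eq_zero (fun m _ => hall m)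
      omega
    obtain ⟨m, hm⟩ := this
    have htb : t = b + rest.sum := by rw [ht, hbr, List.sum_cons]
    intro h0
    have : t m = 0 := by rw [h0]; rfl
    rw [htb, Pi.add_apply] at this
    omega
  -- si ∈ Bmon
  have hsiB : si ∈ Bmon d α c a := by
    refine AddSubmonoid.list_sum_mem _ (fun b hb => ?_)
    exact AddSubmonoid.subset_closure (hgen b ((List.take_sublist i L).mem hb))
  have hzB : yj + si ∈ Bmon d α c a := add_mem hyjB hsiB
  have hcontra := hx.2 t htA htne (yj + si) hzB
  apply hcontra
  rw [← hyi, ← hyij]; abel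
end

section
/- With notation as above, every element x of B_A satisfies deg x ≤ deg K[B] − codim K[B], where deg K[B] equals the number f of equivalence classes of B_A under x ∼ y ⟺ x − y ∈ αℤ^d, and codim K[B] = c. Equivalently: deg x ≤ f − c for all x ∈ B_A, where deg x = (Σ_i x_i)/α. -/
open scoped Classical

section AuxLemmas

variable {d α c : ℕ} {a : Fin c → Fin d → ℕ}

lemma sum_eVec (i : Fin d) : ∑ j, eVec d α i j = α := by
  simp [eVec]

lemma sum_genSet (ha : ∀ i, ∑ j, a i j = α) {g : Fin d → ℕ} (hg : g ∈ genSet d α c a) :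
    ∑ j, g j = α := by
  rcases hg with hg | hg
  · obtain ⟨i, rfl⟩ := hg; exact sum_eVec i
  · obtain ⟨i, rfl⟩ := hg; exact ha i

lemma sum_listsum (ha : ∀ i, ∑ j, a i j = α) :
    ∀ L : List (Fin d → ℕ), (∀ b ∈ L, b ∈ genSet d α c a) →
      ∑ j, L.sum j = L.length * α := by
  intro L
  induction L with
  | nil => intro _; simp
  | cons b L ih =>
    intro h
    have hb := sum_genSet ha (h b List.mem_cons_self)
    have ihL := ih (fun g hg => h g (List.mem_cons_of_mem b hg))
    simp only [List.sum_cons, Pi.add_apply, Finset.sum_add_distrib, hb, ihL, List.length_cons]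
    ring

lemma dvd_of_mem_Amon {y : Fin d → ℕ} (hy : y ∈ Amon d α) : ∀ i, α ∣ y i := by
  induction hy using AddSubmonoid.closure_induction with
  | mem g hg =>
    obtain ⟨t, rfl⟩ := hg
    intro i
    simp only [eVec]
    split <;> simp
  | zero => simp
  | add f g _ _ hf hg => intro i; exact dvd_add (hf i) (hg i)

lemma mem_Amon_of_dvd {y : Fin d → ℕ} (hy : ∀ i, α ∣ y i) : y ∈ Amon d α := by
  have hrep : y = ∑ i, (y i / α) • eVec d α i := by
    funext j
    simp only [Finset.sum_apply, Pi.smul_apply, eVec, smul_eq_mul]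
    rw [Finset.sum_eq_single j]
    · simp [Nat.div_mul_cancel (hy j)]
    · intro i _ hij
      simp [Ne.symm hij]
    · simp
  rw [hrep]
  exact AddSubmonoid.sum_mem _ fun i _ =>
    AddSubmonoid.nsmul_mem _ (AddSubmonoid.subset_closure (Set.mem_range_self i)) _

lemma equivA_symm {x y : Fin d → ℕ} (h : equivA α x y) : equivA α y x :=
  fun t => dvd_sub_comm.mp (h t)

end AuxLemmas

/-- every `x ∈ B_A` satisfies `deg x ≤ f − c`, where `f` is the number
of equivalence classes of `B_A` modulo `αℤ^d` (equal to `deg K[B]`) and `c = codim K[B]`. -/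
theorem deg_le_degKB_sub_codim (d α c : ℕ) (hd : 0 < d) (hα : 0 < α) (hc : 0 < c)
    (a : Fin c → Fin d → ℕ) (ha : ∀ i, ∑ j, a i j = α)
    (hainj : Function.Injective a) (hae : ∀ i j, a i ≠ eVec d α j)
    (x : Fin d → ℕ) (hx : x ∈ BAset d α c a) :
    (degv α x : ℤ) ≤ (numClasses d α c a : ℤ) - c := by
  obtain ⟨hxB, hxA⟩ := hx
  obtain ⟨L, hLmem, hLsum⟩ := AddSubmonoid.exists_list_of_mem_closure hxB
  set k := L.length with hk
  -- each coordinate of each `a i` is < α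
  have hcoord : ∀ i t, a i t < α := by
    intro i t
    have hle : a i t ≤ α := by
      conv_rhs => rw [← ha i]
      exact Finset.single_le_sum (fun j _ => Nat.zero_le _) (Finset.mem_univ t)
    rcases lt_or_eq_of_le hle with h | h
    · exact h
    · exfalso
      apply hae i t
      funext j
      by_cases hjt : j = t
      · subst hjt; simp [eVec, h]
      · have h2 : a i t + ∑ j ∈ Finset.univ.erase t, a i j = α := by
          rw [Finset.add_sum_erase _ _ (Finset.mem_univ t)]; exact ha i
        have h3 : ∑ j ∈ Finset.univ.erase t, a i j = 0 := by omega
        have h4 := (Finset.sum_eq_zero_iff).mp h3 j (by simp [hjt])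
        simp [eVec, hjt, h4]
  have hsumx : ∑ j, x j = k * α := by rw [← hLsum]; exact sum_listsum ha L hLmem
  have hdeg : degv α x = k := by
    simp [degv, hsumx, Nat.mul_div_cancel _ hα]
  -- partial values
  set p : ℕ → Fin d → ℕ := fun j => (L.drop j).sum with hp
  have hpB : ∀ j, p j ∈ Bmon d α c a := fun j =>
    AddSubmonoid.list_sum_mem _ fun g hg =>
      AddSubmonoid.subset_closure (hLmem g (List.drop_subset j L hg))
  have htakeB : ∀ j, (L.take j).sum ∈ Bmon d α c a := fun j =>
    AddSubmonoid.list_sum_mem _ fun g hg =>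
      AddSubmonoid.subset_closure (hLmem g (List.take_subset j L hg))
  have hptake : ∀ j, (L.take j).sum + p j = x := by
    intro j
    rw [hp]
    dsimp only
    rw [← List.sum_append, List.take_append_drop]
    exact hLsum
  have hsplit : ∀ j j', j ≤ j' → p j = ((L.drop j).take (j' - j)).sum + p j' := by
    intro j j' hjj
    have hdd : (L.drop j).drop (j' - j) = L.drop j' := by
      rw [List.drop_drop]
      congr 1
      omega
    rw [hp]
    dsimp only
    rw [← hdd, ← List.sum_append, List.take_append_drop]
  have hsump : ∀ j, ∑ t, p j t = (k - j) * α := by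
    intro j
    have h1 := sum_listsum ha (L.drop j) (fun g hg => hLmem g (List.drop_subset j L hg))
    rw [List.length_drop] at h1
    exact h1
  have hpk : p k = 0 := by
    rw [hp]
    dsimp only
    rw [hk, List.drop_length, List.sum_nil]
  -- partial values are in B_A
  have hpBA : ∀ j, p j ∈ BAset d α c a := by
    intro j
    refine ⟨hpB j, fun y hy hy0 z hz hzy => ?_⟩
    refine hxA y hy hy0 (z + (L.take j).sum)
      (AddSubmonoid.add_mem _ hz (htakeB j)) ?_
    have h1 : z + (L.take j).sum + y = (L.take j).sum + (z + y) := by abel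
    rw [h1, hzy, hptake j]
  -- a i ∈ B
  have hamem : ∀ i, a i ∈ Bmon d α c a := fun i =>
    AddSubmonoid.subset_closure (Or.inr ⟨i, rfl⟩)
  -- a i ∈ B_A
  have haBA : ∀ i, a i ∈ BAset d α c a := by
    intro i
    refine ⟨hamem i, fun y hy hy0 z hz hzy => ?_⟩
    have hy0' : ∃ t, y t ≠ 0 := by
      by_contra h
      push_neg at h
      exact hy0 (funext fun t => h t)
    obtain ⟨t0, ht0⟩ := hy0'
    have hge : α ≤ y t0 := Nat.le_of_dvd (Nat.pos_of_ne_zero ht0) (dvd_of_mem_Amon hy t0)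
    have h2 : z t0 + y t0 = a i t0 := congrFun hzy t0
    have h3 := hcoord i t0
    omega
  -- 0 ∈ B_A
  have h0BA : (0 : Fin d → ℕ) ∈ BAset d α c a := by
    refine ⟨AddSubmonoid.zero_mem _, fun y hy hy0 z hz hzy => ?_⟩
    apply hy0
    funext t
    have h2 : z t + y t = 0 := congrFun hzy t
    show y t = 0
    omega
  -- pairwise inequivalence of partial values
  have hineq_pp : ∀ j j', j < j' → j' ≤ k → ¬ equivA α (p j) (p j') := by
    intro j j' hjj hj'k heq
    set s := ((L.drop j).take (j' - j)).sum with hs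
    have hps : p j = s + p j' := hsplit j j' (le_of_lt hjj)
    have hsdvd : ∀ t, α ∣ s t := by
      intro t
      have h1 := heq t
      have h2 : p j t = s t + p j' t := by rw [hps]; rfl
      have h3 : (α : ℤ) ∣ (s t : ℤ) := by
        have h4 : ((p j t : ℤ) - p j' t) = (s t : ℤ) := by omega
        rwa [h4] at h1
      exact_mod_cast h3
    have hsA : s ∈ Amon d α := mem_Amon_of_dvd hsdvd
    have hsum_s : ∑ t, s t = (j' - j) * α := by
      have hlen : ((L.drop j).take (j' - j)).length = j' - j := by
        rw [List.length_take, List.length_drop]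
        omega
      have h5 := sum_listsum ha ((L.drop j).take (j' - j))
        (fun g hg => hLmem g (List.drop_subset j L (List.take_subset _ _ hg)))
      rw [hlen] at h5
      rw [hs]
      exact h5
    have hs0 : s ≠ 0 := by
      intro h
      rw [h] at hsum_s
      simp only [Pi.zero_apply, Finset.sum_const_zero] at hsum_s
      have hpos : 0 < (j' - j) * α := Nat.mul_pos (by omega) hα
      omega
    refine hxA s hsA hs0 (p j' + (L.take j).sum)
      (AddSubmonoid.add_mem _ (hpB j') (htakeB j)) ?_
    have h6 : p j' + (L.take j).sum + s = (L.take j).sum + (s + p j') := by abel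
    rw [h6, ← hps, hptake j]
  -- a's pairwise inequivalent
  have hineq_aa : ∀ i i', i ≠ i' → ¬ equivA α (a i) (a i') := by
    intro i i' hne heq
    apply hne
    apply hainj
    funext t
    have h1 := heq t
    have h2 : ((a i t : ℤ) - a i' t) = 0 := by
      refine Int.eq_zero_of_abs_lt_dvd h1 ?_
      have h3 := hcoord i t
      have h4 := hcoord i' t
      rw [abs_lt]
      constructor <;> push_cast <;> omega
    have h5 : (a i t : ℤ) = a i' t := by omega
    exact_mod_cast h5
  -- a i not equivalent to 0
  have hineq_a0 : ∀ i, ¬ equivA α (a i) 0 := by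
    intro i heq
    have hz : ∀ t, a i t = 0 := by
      intro t
      have h1 := heq t
      have h2 : (α : ℤ) ∣ (a i t : ℤ) := by simpa using h1
      have h3 : α ∣ a i t := by exact_mod_cast h2
      exact Nat.eq_zero_of_dvd_of_lt h3 (hcoord i t)
    have h4 := ha i
    rw [Finset.sum_congr rfl (fun t _ => hz t)] at h4
    simp at h4
    omega
  -- partial value of degree ≥ 2 not equivalent to any a i
  have hineq_pa : ∀ m i, m + 2 ≤ k → ¬ equivA α (p m) (a i) := by
    intro m i hm heq
    have hge : ∀ t, a i t ≤ p m t := by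
      intro t
      by_contra hlt
      push_neg at hlt
      have h1 := heq t
      have h2 : (α : ℤ) ∣ (a i t : ℤ) - p m t := dvd_sub_comm.mp h1
      have h3 : (α : ℤ) ≤ (a i t : ℤ) - p m t := Int.le_of_dvd (by push_cast; omega) h2
      have h4 := hcoord i t
      omega
    set w : Fin d → ℕ := fun t => p m t - a i t with hw
    have hwdvd : ∀ t, α ∣ w t := by
      intro t
      have h1 := heq t
      have h2 : ((p m t : ℤ) - a i t) = (w t : ℤ) := by
        have := hge t
        show ((p m t : ℤ) - a i t) = ((p m t - a i t : ℕ) : ℤ)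
        omega
      rw [h2] at h1
      exact_mod_cast h1
    have hwA : w ∈ Amon d α := mem_Amon_of_dvd hwdvd
    have haw : a i + w = p m := by
      funext t
      have := hge t
      show a i t + (p m t - a i t) = p m t
      omega
    have hw0 : w ≠ 0 := by
      intro h
      rw [h, add_zero] at haw
      have h1 := hsump m
      rw [← haw, ha i] at h1
      have h2 : 2 * α ≤ (k - m) * α := Nat.mul_le_mul_right α (by omega)
      rw [← h1] at h2
      omega
    refine hxA w hwA hw0 (a i + (L.take m).sum)
      (AddSubmonoid.add_mem _ (hamem i) (htakeB m)) ?_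
    have h1 : a i + (L.take m).sum + w = (L.take m).sum + (a i + w) := by abel
    rw [h1, haw, hptake m]
  -- counting classes
  haveI : NeZero α := ⟨hα.ne'⟩
  let φ : Quotient (eqvSetoid α (BAset d α c a)) → (Fin d → ZMod α) :=
    Quotient.lift (fun y => fun t => ((y.1 t : ℕ) : ZMod α))
      (by
        intro u v huv
        funext t
        have h1 : (((u.1 t : ℤ) - v.1 t : ℤ) : ZMod α) = 0 :=
          (ZMod.intCast_zmod_eq_zero_iff_dvd _ _).mpr (huv t)
        push_cast at h1
        exact sub_eq_zero.mp h1)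
  haveI : Finite (Quotient (eqvSetoid α (BAset d α c a))) := by
    apply Finite.of_injective φ
    intro u v huv
    induction u using Quotient.ind with | _ u => ?_
    induction v using Quotient.ind with | _ v => ?_
    apply Quotient.sound
    intro t
    have h1 : ((u.1 t : ℕ) : ZMod α) = (v.1 t : ZMod α) := congrFun huv t
    have h2 : (((u.1 t : ℤ) - v.1 t : ℤ) : ZMod α) = 0 := by
      push_cast
      rw [h1]
      ring
    exact (ZMod.intCast_zmod_eq_zero_iff_dvd _ _).mp h2
  -- the injection from Fin c ⊕ Fin k
  let q : Fin k → Fin d → ℕ := fun j => if (j : ℕ) + 1 = k then 0 else p j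
  have hqBA : ∀ j : Fin k, q j ∈ BAset d α c a := by
    intro j
    by_cases h : (j : ℕ) + 1 = k
    · simpa [q, h] using h0BA
    · simpa [q, h] using hpBA (j : ℕ)
  let g : Fin c ⊕ Fin k → Quotient (eqvSetoid α (BAset d α c a)) :=
    Sum.elim (fun i => Quotient.mk _ ⟨a i, haBA i⟩) (fun j => Quotient.mk _ ⟨q j, hqBA j⟩)
  have keyq : ∀ j j' : Fin k, (j : ℕ) < (j' : ℕ) → ¬ equivA α (q j) (q j') := by
    intro j j' hlt hE
    by_cases h' : (j' : ℕ) + 1 = k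
    · have h : (j : ℕ) + 1 ≠ k := by omega
      rw [show q j' = 0 by simp [q, h'], show q j = p (j : ℕ) by simp [q, h]] at hE
      refine hineq_pp (j : ℕ) k (by omega) le_rfl ?_
      rwa [hpk]
    · have h : (j : ℕ) + 1 ≠ k := by have := j'.2; omega
      rw [show q j = p (j : ℕ) by simp [q, h], show q j' = p (j' : ℕ) by simp [q, h']] at hE
      exact hineq_pp (j : ℕ) (j' : ℕ) hlt (le_of_lt j'.2) hE
  have hginj : Function.Injective g := by
    intro u v huv
    rcases u with i | j <;> rcases v with i' | j'
    · have hE : equivA α (a i) (a i') := Quotient.exact huv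
      by_contra hne
      exact hineq_aa i i' (fun h => hne (by rw [h])) hE
    · exfalso
      have hE : equivA α (a i) (q j') := Quotient.exact huv
      by_cases h : (j' : ℕ) + 1 = k
      · rw [show q j' = 0 by simp [q, h]] at hE
        exact hineq_a0 i hE
      · rw [show q j' = p (j' : ℕ) by simp [q, h]] at hE
        have hjk : (j' : ℕ) + 2 ≤ k := by have := j'.2; omega
        exact hineq_pa (j' : ℕ) i hjk (equivA_symm hE)
    · exfalso
      have hE : equivA α (q j) (a i') := Quotient.exact huv
      by_cases h : (j : ℕ) + 1 = k
      · rw [show q j = 0 by simp [q, h]] at hE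
        exact hineq_a0 i' (equivA_symm hE)
      · rw [show q j = p (j : ℕ) by simp [q, h]] at hE
        have hjk : (j : ℕ) + 2 ≤ k := by have := j.2; omega
        exact hineq_pa (j : ℕ) i' hjk hE
    · have hE : equivA α (q j) (q j') := Quotient.exact huv
      have hjj : j = j' := by
        rcases lt_trichotomy (j : ℕ) (j' : ℕ) with h | h | h
        · exact absurd hE (keyq j j' h)
        · exact Fin.ext h
        · exact absurd (equivA_symm hE) (keyq j' j h)
      rw [hjj]
  have hcard : c + k ≤ numClasses d α c a := by
    have h1 := Nat.card_le_card_of_injective g hginj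
    simpa [Nat.card_sum, numClasses] using h1
  have hfin : (k : ℤ) + c ≤ (numClasses d α c a : ℤ) := by exact_mod_cast by omega
  rw [hdeg]
  omega
end

section
/- Let x ∈ B \ {0}, λ = (b_1,...,b_{deg x}) ∈ Λ_x, and σ a permutation of {1,...,deg x}. Then (b_{σ(1)},...,b_{σ(deg x)}) ∈ Λ_x, i.e., any permutation of a full-length sequence with *-property of x is again a sequence with *-property of x. -/
open scoped Classical

lemma gen_sum_coords (d α c : ℕ) (a : Fin c → Fin d → ℕ) (ha : ∀ i, ∑ j, a i j = α)
    {b : Fin d → ℕ} (hb : b ∈ genSet d α c a) : ∑ i, b i = α := by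
  rcases hb with ⟨i, rfl⟩ | ⟨i, rfl⟩
  · simp [eVec]
  · exact ha i

lemma dvd_sum_coords (d α c : ℕ) (a : Fin c → Fin d → ℕ) (ha : ∀ i, ∑ j, a i j = α)
    {x : Fin d → ℕ} (hx : x ∈ Bmon d α c a) : α ∣ ∑ i, x i := by
  induction hx using AddSubmonoid.closure_induction with
  | mem b hb => exact (gen_sum_coords d α c a ha hb) ▸ dvd_refl α
  | zero => simp
  | add y z _ _ hy hz =>
      have : ∑ i, (y + z) i = (∑ i, y i) + ∑ i, z i := by
        simp [Finset.sum_add_distrib]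
      rw [this]; exact dvd_add hy hz

lemma list_sum_coords (d α c : ℕ) (a : Fin c → Fin d → ℕ) (ha : ∀ i, ∑ j, a i j = α)
    (L : List (Fin d → ℕ)) (hL : ∀ b ∈ L, b ∈ genSet d α c a) :
    ∑ i, L.sum i = α * L.length := by
  induction L with
  | nil => simp
  | cons b t ih =>
      have hsum : ∑ i, (b + t.sum) i = (∑ i, b i) + ∑ i, t.sum i := by
        simp [Finset.sum_add_distrib]
      simp only [List.sum_cons, hsum, gen_sum_coords d α c a ha (hL b (by simp)),
        ih (fun b hb => hL b (by simp [hb])), List.length_cons]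
      ring

/-- any permutation of a full-length sequence with *-property of `x`
is again a full-length sequence with *-property of `x`. -/
theorem perm_mem_Lam (d α c : ℕ) (hd : 0 < d) (hα : 0 < α) (hc : 0 < c)
    (a : Fin c → Fin d → ℕ) (ha : ∀ i, ∑ j, a i j = α)
    (x : Fin d → ℕ) (hx : x ∈ Bmon d α c a) (hx0 : x ≠ 0)
    (L L' : List (Fin d → ℕ)) (hL : L ∈ Lam d α c a x) (hperm : L.Perm L') :
    L' ∈ Lam d α c a x := by
  obtain ⟨⟨hmem, hstar⟩, hlen⟩ := hL
  obtain ⟨y, hy, hyx⟩ := hstar L.length le_rfl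
  rw [List.take_length] at hyx
  -- show y = 0, hence L.sum = x
  have hxcoord : ∑ i, x i = α * L.length := by
    rw [hlen, degv, Nat.mul_div_cancel' (dvd_sum_coords d α c a ha hx)]
  have hLsum : ∑ i, L.sum i = α * L.length := list_sum_coords d α c a ha L hmem
  have hcoords : (∑ i, y i) + ∑ i, L.sum i = ∑ i, x i := by
    rw [← hyx]; simp [Finset.sum_add_distrib]
  have hy0 : ∑ i, y i = 0 := by omega
  have : y = 0 := by
    funext i
    have := (Finset.sum_eq_zero_iff.mp hy0) i (Finset.mem_univ i)
    simpa using this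
  have hsum : L.sum = x := by rw [← hyx, this, zero_add]
  have hsum' : L'.sum = x := by rw [← hperm.sum_eq, hsum]
  refine ⟨⟨fun b hb => hmem b (hperm.mem_iff.mpr hb), fun i _ => ?_⟩,
    hperm.length_eq ▸ hlen⟩
  refine ⟨(L'.drop i).sum, ?_, ?_⟩
  · exact AddSubmonoid.list_sum_mem _ (fun b hb =>
      AddSubmonoid.subset_closure (hmem b (hperm.mem_iff.mpr (List.mem_of_mem_drop hb))))
  · rw [add_comm, ← List.sum_append, List.take_append_drop, hsum']
end

section
/- (Splitting of Δ at an equivalence.) With x, y ∈ B\{0}, x ∼ y, λ = (b_1,...,b_{deg x}) ∈ Λ_x, ν = (g_1,...,g_{deg y}) ∈ Λ_y, suppose x(λ,i) ∼ y(ν,k) for some 1 ≤ i ≤ deg x − 1, 1 ≤ k ≤ deg y − 1. Let λ' = (b_1,...,b_i), ν' = (g_1,...,g_k), λ'' = (b_{i+1},...,b_{deg x}), ν'' = (g_{k+1},...,g_{deg y}), which are full-length *-sequences of x' = Σ_{j≤i} b_j, y' = Σ_{j≤k} g_j, x'' = x(λ,i), y'' = y(ν,k) respectively. Then: Δ(λ',ν')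 = { (m,n) ∈ Δ(λ,ν) : (m,n) ≤ (i,k) } and {(i,k)} + Δ(λ'',ν'') = { (m,n) ∈ Δ(λ,ν) : (m,n) ≥ (i,k) }, and consequently δ(λ',ν') + δ(λ'',ν'') ≤ δ(λ,ν) − 1, with equality when λ and ν are crossless. -/
open scoped Classical

lemma take_sum_le' {d : ℕ} (L : List (Fin d → ℕ)) {m m' : ℕ} (h : m ≤ m') (j : Fin d) :
    (L.take m).sum j ≤ (L.take m').sum j := by
  conv_rhs => rw [← List.take_append_drop m (L.take m')]
  rw [List.take_take, min_eq_left h, List.sum_append]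
  simpa using Nat.le_add_right _ _

lemma mem_DeltaF' {α d : ℕ} {x y : Fin d → ℕ} {L M : List (Fin d → ℕ)} {p : ℕ × ℕ} :
    p ∈ DeltaF α x y L M ↔
      p.1 ≤ L.length ∧ p.2 ≤ M.length ∧ equivA α (pval x L p.1) (pval y M p.2) := by
  simp [DeltaF, Finset.mem_filter, Finset.mem_product, Nat.lt_succ_iff, and_assoc]

/-- splitting of `Δ(λ,ν)` at an equivalence `x(λ,i) ∼ y(ν,k)`.
With `λ' = (b_1,…,b_i)`, `ν' = (g_1,…,g_k)`, `λ'' = (b_{i+1},…)`, `ν'' = (g_{k+1},…)`,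
full-length *-sequences of `x' = Σ_{j≤i} b_j`, `y' = Σ_{j≤k} g_j`, `x'' = x(λ,i)`,
`y'' = y(ν,k)`: `Δ(λ',ν')` is the part of `Δ(λ,ν)` below `(i,k)`,
`(i,k) + Δ(λ'',ν'')` is the part above `(i,k)`, and
`δ(λ',ν') + δ(λ'',ν'') ≤ δ(λ,ν) − 1`, with equality when `λ, ν` are crossless. -/
theorem Delta_splitting (d α c : ℕ) (hd : 0 < d) (hα : 0 < α) (hc : 0 < c)
    (a : Fin c → Fin d → ℕ) (ha : ∀ i, ∑ j, a i j = α)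
    (x y : Fin d → ℕ) (hx : x ∈ Bmon d α c a) (hx0 : x ≠ 0)
    (hy : y ∈ Bmon d α c a) (hy0 : y ≠ 0) (hxy : equivA α x y)
    (L : List (Fin d → ℕ)) (hL : L ∈ Lam d α c a x)
    (M : List (Fin d → ℕ)) (hM : M ∈ Lam d α c a y)
    (i k : ℕ) (hi1 : 1 ≤ i) (hi2 : i + 1 ≤ degv α x)
    (hk1 : 1 ≤ k) (hk2 : k + 1 ≤ degv α y)
    (heq : equivA α (pval x L i) (pval y M k)) :
    DeltaF α ((L.take i).sum) ((M.take k).sum) (L.take i) (M.take k)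
        = (DeltaF α x y L M).filter (fun p => p.1 ≤ i ∧ p.2 ≤ k) ∧
    (DeltaF α (pval x L i) (pval y M k) (L.drop i) (M.drop k)).image
        (fun p => (i + p.1, k + p.2))
        = (DeltaF α x y L M).filter (fun p => i ≤ p.1 ∧ k ≤ p.2) ∧
    (((DeltaF α ((L.take i).sum) ((M.take k).sum) (L.take i) (M.take k)).card : ℤ) - 2)
      + (((DeltaF α (pval x L i) (pval y M k) (L.drop i) (M.drop k)).card : ℤ) - 2)
      ≤ (((DeltaF α x y L M).card : ℤ) - 2) - 1 ∧
    (crossless α x y L M →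
      (((DeltaF α ((L.take i).sum) ((M.take k).sum) (L.take i) (M.take k)).card : ℤ) - 2)
        + (((DeltaF α (pval x L i) (pval y M k) (L.drop i) (M.drop k)).card : ℤ) - 2)
        = (((DeltaF α x y L M).card : ℤ) - 2) - 1) := by
  classical
  obtain ⟨⟨hLgen, hLstar⟩, hLlen⟩ := hL
  obtain ⟨⟨hMgen, hMstar⟩, hMlen⟩ := hM
  have hiL : i < L.length := by omega
  have hkM : k < M.length := by omega
  -- prefix sums are bounded by x, y
  have hsx : ∀ m, m ≤ L.length → ∀ j, (L.take m).sum j ≤ x j := by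
    intro m hm j
    obtain ⟨w, -, hw⟩ := hLstar m hm
    have := congrFun hw j
    simp only [Pi.add_apply] at this
    omega
  have hty : ∀ n, n ≤ M.length → ∀ j, (M.take n).sum j ≤ y j := by
    intro n hn j
    obtain ⟨w, -, hw⟩ := hMstar n hn
    have := congrFun hw j
    simp only [Pi.add_apply] at this
    omega
  -- integer value of pval
  have hpx : ∀ m, m ≤ L.length → ∀ j,
      ((pval x L m) j : ℤ) = (x j : ℤ) - ((L.take m).sum j : ℤ) := by
    intro m hm j
    have h3 : (pval x L m) j = x j - (L.take m).sum j := rfl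
    have := hsx m hm j
    omega
  have hpy : ∀ n, n ≤ M.length → ∀ j,
      ((pval y M n) j : ℤ) = (y j : ℤ) - ((M.take n).sum j : ℤ) := by
    intro n hn j
    have h3 : (pval y M n) j = y j - (M.take n).sum j := rfl
    have := hty n hn j
    omega
  -- characterization of the big Delta condition
  have hP : ∀ m, m ≤ L.length → ∀ n, n ≤ M.length →
      (equivA α (pval x L m) (pval y M n) ↔
        ∀ j, (α : ℤ) ∣ (((x j : ℤ) - (L.take m).sum j) - ((y j : ℤ) - (M.take n).sum j))) := by
    intro m hm n hn
    unfold equivA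
    refine forall_congr' fun j => ?_
    rw [hpx m hm j, hpy n hn j]
  have heqP : ∀ j, (α : ℤ) ∣
      (((x j : ℤ) - (L.take i).sum j) - ((y j : ℤ) - (M.take k).sum j)) :=
    (hP i hiL.le k hkM.le).mp heq
  -- integer value of pval for the truncated sequences
  have hpx' : ∀ m, m ≤ i → ∀ j,
      ((pval ((L.take i).sum) (L.take i) m) j : ℤ)
        = ((L.take i).sum j : ℤ) - ((L.take m).sum j : ℤ) := by
    intro m hm j
    have h1 : ((L.take i).take m) = L.take m := by rw [List.take_take, min_eq_left hm]
    have h2 : (L.take m).sum j ≤ (L.take i).sum j := take_sum_le' L hm j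
    have h3 : (pval ((L.take i).sum) (L.take i) m) j
        = (L.take i).sum j - ((L.take i).take m).sum j := rfl
    rw [h3, h1]
    omega
  have hpy' : ∀ n, n ≤ k → ∀ j,
      ((pval ((M.take k).sum) (M.take k) n) j : ℤ)
        = ((M.take k).sum j : ℤ) - ((M.take n).sum j : ℤ) := by
    intro n hn j
    have h1 : ((M.take k).take n) = M.take n := by rw [List.take_take, min_eq_left hn]
    have h2 : (M.take n).sum j ≤ (M.take k).sum j := take_sum_le' M hn j
    have h3 : (pval ((M.take k).sum) (M.take k) n) j
        = (M.take k).sum j - ((M.take k).take n).sum j := rfl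
    rw [h3, h1]
    omega
  -- integer value of pval for the dropped sequences
  have hpx'' : ∀ m, i + m ≤ L.length → ∀ j,
      ((pval (pval x L i) (L.drop i) m) j : ℤ)
        = (x j : ℤ) - ((L.take (i + m)).sum j : ℤ) := by
    intro m hm j
    have h1 : (L.take (i + m)).sum j = (L.take i).sum j + ((L.drop i).take m).sum j := by
      rw [List.take_add, List.sum_append]; rfl
    have h2 : (L.take (i + m)).sum j ≤ x j := hsx _ hm j
    have h3 : (L.take i).sum j ≤ x j := hsx _ (by omega) j
    have h4 : (pval (pval x L i) (L.drop i) m) j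
        = (x j - (L.take i).sum j) - ((L.drop i).take m).sum j := rfl
    rw [h4]
    omega
  have hpy'' : ∀ n, k + n ≤ M.length → ∀ j,
      ((pval (pval y M k) (M.drop k) n) j : ℤ)
        = (y j : ℤ) - ((M.take (k + n)).sum j : ℤ) := by
    intro n hn j
    have h1 : (M.take (k + n)).sum j = (M.take k).sum j + ((M.drop k).take n).sum j := by
      rw [List.take_add, List.sum_append]; rfl
    have h2 : (M.take (k + n)).sum j ≤ y j := hty _ hn j
    have h3 : (M.take k).sum j ≤ y j := hty _ (by omega) j
    have h4 : (pval (pval y M k) (M.drop k) n) j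
        = (y j - (M.take k).sum j) - ((M.drop k).take n).sum j := rfl
    rw [h4]
    omega
  -- equivalence for the primed sequences vs the big one
  have hP1 : ∀ m, m ≤ i → ∀ n, n ≤ k →
      (equivA α (pval ((L.take i).sum) (L.take i) m) (pval ((M.take k).sum) (M.take k) n) ↔
        equivA α (pval x L m) (pval y M n)) := by
    intro m hm n hn
    rw [hP m (by omega) n (by omega)]
    unfold equivA
    refine forall_congr' fun j => ?_
    rw [hpx' m hm j, hpy' n hn j]
    constructor <;> intro h
    · have h2 := dvd_add (heqP j) h
      have h3 : ((x j : ℤ) - (L.take m).sum j) - ((y j : ℤ) - (M.take n).sum j)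
          = (((x j : ℤ) - (L.take i).sum j) - ((y j : ℤ) - (M.take k).sum j))
            + ((((L.take i).sum j : ℤ) - (L.take m).sum j)
              - (((M.take k).sum j : ℤ) - (M.take n).sum j)) := by ring
      rw [h3]; exact h2
    · have h2 := dvd_sub h (heqP j)
      have h3 : (((L.take i).sum j : ℤ) - (L.take m).sum j)
            - (((M.take k).sum j : ℤ) - (M.take n).sum j)
          = (((x j : ℤ) - (L.take m).sum j) - ((y j : ℤ) - (M.take n).sum j))
            - (((x j : ℤ) - (L.take i).sum j) - ((y j : ℤ) - (M.take k).sum j)) := by ring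
      rw [h3]; exact h2
  -- equivalence for the dropped sequences vs the big one
  have hP2 : ∀ m, i + m ≤ L.length → ∀ n, k + n ≤ M.length →
      (equivA α (pval (pval x L i) (L.drop i) m) (pval (pval y M k) (M.drop k) n) ↔
        equivA α (pval x L (i + m)) (pval y M (k + n))) := by
    intro m hm n hn
    rw [hP (i + m) hm (k + n) hn]
    unfold equivA
    refine forall_congr' fun j => ?_
    rw [hpx'' m hm j, hpy'' n hn j]
  have hlen1 : (L.take i).length = i := by
    rw [List.length_take, min_eq_left hiL.le]
  have hlen2 : (M.take k).length = k := by
    rw [List.length_take, min_eq_left hkM.le]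
  have hlen3 : (L.drop i).length = L.length - i := List.length_drop ..
  have hlen4 : (M.drop k).length = M.length - k := List.length_drop ..
  -- first equality
  have E1 : DeltaF α ((L.take i).sum) ((M.take k).sum) (L.take i) (M.take k)
      = (DeltaF α x y L M).filter (fun p => p.1 ≤ i ∧ p.2 ≤ k) := by
    ext ⟨m, n⟩
    simp only [Finset.mem_filter, mem_DeltaF', hlen1, hlen2]
    constructor
    · rintro ⟨hm, hn, h⟩
      exact ⟨⟨by omega, by omega, (hP1 m hm n hn).mp h⟩, hm, hn⟩
    · rintro ⟨⟨-, -, h⟩, hm, hn⟩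
      exact ⟨hm, hn, (hP1 m hm n hn).mpr h⟩
  -- second equality
  have E2 : (DeltaF α (pval x L i) (pval y M k) (L.drop i) (M.drop k)).image
        (fun p => (i + p.1, k + p.2))
      = (DeltaF α x y L M).filter (fun p => i ≤ p.1 ∧ k ≤ p.2) := by
    ext ⟨p, q⟩
    simp only [Finset.mem_filter, Finset.mem_image, mem_DeltaF', hlen3, hlen4, Prod.mk.injEq]
    constructor
    · rintro ⟨⟨m, n⟩, ⟨hm, hn, h⟩, hp, hq⟩
      subst hp; subst hq
      exact ⟨⟨by omega, by omega, (hP2 m (by omega) n (by omega)).mp h⟩, by omega, by omega⟩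
    · rintro ⟨⟨hp, hq, h⟩, hip, hkq⟩
      refine ⟨(p - i, q - k), ⟨by omega, by omega, ?_⟩, by omega, by omega⟩
      rw [hP2 (p - i) (by omega) (q - k) (by omega)]
      have h1 : i + (p - i) = p := by omega
      have h2 : k + (q - k) = q := by omega
      rw [h1, h2]; exact h
  refine ⟨E1, E2, ?_, ?_⟩
  · -- inequality
    have hinj : Function.Injective (fun p : ℕ × ℕ => (i + p.1, k + p.2)) := by
      rintro ⟨a1, a2⟩ ⟨b1, b2⟩ h
      simp only [Prod.mk.injEq] at h
      exact Prod.ext (by omega) (by omega)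
    have hcard : ((DeltaF α (pval x L i) (pval y M k) (L.drop i) (M.drop k)).image
        (fun p => (i + p.1, k + p.2))).card
        = (DeltaF α (pval x L i) (pval y M k) (L.drop i) (M.drop k)).card :=
      Finset.card_image_of_injective _ hinj
    set A := (DeltaF α x y L M).filter (fun p => p.1 ≤ i ∧ p.2 ≤ k) with hA
    set B := (DeltaF α x y L M).filter (fun p => i ≤ p.1 ∧ k ≤ p.2) with hB
    have hik : (i, k) ∈ DeltaF α x y L M := mem_DeltaF'.mpr ⟨hiL.le, hkM.le, heq⟩
    have hAB : A ∩ B = {(i, k)} := by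
      ext ⟨m, n⟩
      simp only [hA, hB, Finset.mem_inter, Finset.mem_filter, Finset.mem_singleton,
        Prod.mk.injEq]
      constructor
      · rintro ⟨⟨-, h1, h2⟩, -, h3, h4⟩
        exact ⟨by omega, by omega⟩
      · rintro ⟨rfl, rfl⟩
        exact ⟨⟨hik, le_refl _, le_refl _⟩, hik, le_refl _, le_refl _⟩
    have hsub : A ∪ B ⊆ DeltaF α x y L M := by
      intro p hp
      rcases Finset.mem_union.mp hp with h | h
      · exact (Finset.mem_filter.mp h).1
      · exact (Finset.mem_filter.mp h).1
    have h1 : A.card + B.card = (A ∪ B).card + (A ∩ B).card :=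
      (Finset.card_union_add_card_inter A B).symm
    have h2 : (A ∪ B).card ≤ (DeltaF α x y L M).card := Finset.card_le_card hsub
    have h3 : (A ∩ B).card = 1 := by rw [hAB]; simp
    have hBc : B.card = (DeltaF α (pval x L i) (pval y M k) (L.drop i) (M.drop k)).card := by
      rw [← E2]; exact hcard
    have hfin : A.card + B.card ≤ (DeltaF α x y L M).card + 1 := by omega
    rw [E1, ← hBc]
    push_cast
    omega
  · -- equality under crossless
    intro hcl
    have hinj : Function.Injective (fun p : ℕ × ℕ => (i + p.1, k + p.2)) := by
      rintro ⟨a1, a2⟩ ⟨b1, b2⟩ h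
      simp only [Prod.mk.injEq] at h
      exact Prod.ext (by omega) (by omega)
    have hcard : ((DeltaF α (pval x L i) (pval y M k) (L.drop i) (M.drop k)).image
        (fun p => (i + p.1, k + p.2))).card
        = (DeltaF α (pval x L i) (pval y M k) (L.drop i) (M.drop k)).card :=
      Finset.card_image_of_injective _ hinj
    set A := (DeltaF α x y L M).filter (fun p => p.1 ≤ i ∧ p.2 ≤ k) with hA
    set B := (DeltaF α x y L M).filter (fun p => i ≤ p.1 ∧ k ≤ p.2) with hB
    have hik : (i, k) ∈ DeltaF α x y L M := mem_DeltaF'.mpr ⟨hiL.le, hkM.le, heq⟩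
    have hAB : A ∩ B = {(i, k)} := by
      ext ⟨m, n⟩
      simp only [hA, hB, Finset.mem_inter, Finset.mem_filter, Finset.mem_singleton,
        Prod.mk.injEq]
      constructor
      · rintro ⟨⟨-, h1, h2⟩, -, h3, h4⟩
        exact ⟨by omega, by omega⟩
      · rintro ⟨rfl, rfl⟩
        exact ⟨⟨hik, le_refl _, le_refl _⟩, hik, le_refl _, le_refl _⟩
    have hU : A ∪ B = DeltaF α x y L M := by
      apply Finset.Subset.antisymm
      · intro p hp
        rcases Finset.mem_union.mp hp with h | h
        · exact (Finset.mem_filter.mp h).1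
        · exact (Finset.mem_filter.mp h).1
      · intro p hp
        rcases hcl p hp (i, k) hik with h | h
        · exact Finset.mem_union_left _ (Finset.mem_filter.mpr ⟨hp, h.1, h.2⟩)
        · exact Finset.mem_union_right _ (Finset.mem_filter.mpr ⟨hp, h.1, h.2⟩)
    have h1 : A.card + B.card = (A ∪ B).card + (A ∩ B).card :=
      (Finset.card_union_add_card_inter A B).symm
    have h3 : (A ∩ B).card = 1 := by rw [hAB]; simp
    rw [hU, h3] at h1
    have hBc : B.card = (DeltaF α (pval x L i) (pval y M k) (L.drop i) (M.drop k)).card := by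
      rw [← E2]; exact hcard
    rw [E1, ← hBc]
    push_cast
    omega
end

section
/- (Distinctness at a cross.) In the setting of a cross — x, y ∈ B_A\{0}, x ∼ y, λ ∈ Λ_x, ν ∈ Λ_y, i < j ≤ deg x, l < k ≤ deg y, x(λ,i) ∼ y(ν,k), x(λ,j) ∼ y(ν,l) — one has x(λ,i) ≠ y(ν,k) and x(λ,j) ≠ y(ν,l). -/
open scoped Classical

lemma sum_coords_gen (d α c : ℕ) (a : Fin c → Fin d → ℕ) (ha : ∀ i, ∑ j, a i j = α)
    {g : Fin d → ℕ} (hg : g ∈ genSet d α c a) : ∑ m, g m = α := by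
  rcases hg with ⟨i, rfl⟩ | ⟨i, rfl⟩
  · simp [eVec, Finset.sum_ite_eq']
  · exact ha i

lemma sum_coords_list {d : ℕ} (α : ℕ) (T : List (Fin d → ℕ))
    (h : ∀ g ∈ T, ∑ m, g m = α) : ∑ m, T.sum m = T.length * α := by
  induction T with
  | nil => simp
  | cons g T ih =>
      have h1 : ∑ m, g m = α := h g (by simp)
      have h2 := ih (fun g hg => h g (by simp [hg]))
      simp only [List.sum_cons, List.length_cons, Pi.add_apply, Finset.sum_add_distrib,
        h1, h2]
      ring

lemma mem_Amon_of_dvd_s13 {d : ℕ} (α : ℕ) (hα : 0 < α) (w : Fin d → ℕ)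
    (h : ∀ m, α ∣ w m) : w ∈ Amon d α := by
  have hw : w = ∑ m, (w m / α) • eVec d α m := by
    funext j
    rw [Finset.sum_apply]
    simp only [Pi.smul_apply, eVec, smul_eq_mul, mul_ite, mul_zero]
    simp only [Finset.sum_ite_eq, Finset.mem_univ, if_true]
    exact (Nat.div_mul_cancel (h j)).symm
  rw [hw]
  exact AddSubmonoid.sum_mem _ fun m _ =>
    AddSubmonoid.nsmul_mem _ (AddSubmonoid.subset_closure (Set.mem_range_self m)) _

lemma pval_spec (d α c : ℕ) (a : Fin c → Fin d → ℕ) (x : Fin d → ℕ)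
    (L : List (Fin d → ℕ)) (hL : L ∈ Lam d α c a x) (i : ℕ) (hi : i ≤ L.length) :
    pval x L i ∈ Bmon d α c a ∧ pval x L i + (L.take i).sum = x := by
  obtain ⟨⟨_, h2⟩, _⟩ := hL
  obtain ⟨z, hz, hzx⟩ := h2 i hi
  have : pval x L i = z := by
    unfold pval
    rw [← hzx, add_tsub_cancel_right]
  rw [this]
  exact ⟨hz, hzx⟩

lemma cross_key (d α c : ℕ) (hα : 0 < α) (a : Fin c → Fin d → ℕ)
    (ha : ∀ i, ∑ j, a i j = α) (x y : Fin d → ℕ)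
    (hy : y ∈ BAset d α c a)
    (L : List (Fin d → ℕ)) (hL : L ∈ Lam d α c a x)
    (M : List (Fin d → ℕ)) (hM : M ∈ Lam d α c a y)
    (i j l k : ℕ) (hij : i < j) (hj : j ≤ L.length) (hlk : l < k) (hk : k ≤ M.length)
    (heq : pval x L i = pval y M k)
    (hequiv : equivA α (pval x L j) (pval y M l)) : False := by
  set T' : List (Fin d → ℕ) := (L.drop i).take (j - i) with hT'
  set S' : List (Fin d → ℕ) := (M.drop l).take (k - l) with hS'
  have hLsplit : L.take j = L.take i ++ T' := by
    rw [hT', ← List.take_add, Nat.add_sub_cancel' hij.le]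
  have hMsplit : M.take k = M.take l ++ S' := by
    rw [hS', ← List.take_add, Nat.add_sub_cancel' hlk.le]
  obtain ⟨hzB, hzx⟩ := pval_spec d α c a x L hL i (le_trans hij.le hj)
  obtain ⟨hvB, hvx⟩ := pval_spec d α c a x L hL j hj
  obtain ⟨huB, huy⟩ := pval_spec d α c a y M hM l (le_trans hlk.le hk)
  obtain ⟨hzB', hzy⟩ := pval_spec d α c a y M hM k hk
  rw [← heq] at hzy
  -- pointwise key identity: u m = v m + T'.sum m + S'.sum m
  have hpt : ∀ m, pval y M l m = pval x L j m + T'.sum m + S'.sum m := by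
    intro m
    have e1 := congrFun hzx m
    have e2 := congrFun hvx m
    have e3 := congrFun huy m
    have e4 := congrFun hzy m
    have e5 : (L.take j).sum m = (L.take i).sum m + T'.sum m := by
      rw [hLsplit, List.sum_append]; rfl
    have e6 : (M.take k).sum m = (M.take l).sum m + S'.sum m := by
      rw [hMsplit, List.sum_append]; rfl
    simp only [Pi.add_apply] at e1 e2 e3 e4
    omega
  -- the A-element
  set w : Fin d → ℕ := T'.sum + S'.sum with hwdef
  have hwdvd : ∀ m, α ∣ w m := by
    intro m
    have h1 := hequiv m
    have h2 := hpt m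
    have : ((α : ℤ)) ∣ -(w m : ℤ) := by
      have : ((pval x L j m : ℤ)) - (pval y M l m : ℤ) = -(w m : ℤ) := by
        rw [hwdef]; simp only [Pi.add_apply]; push_cast [h2]; ring
      rw [← this]; exact h1
    rw [dvd_neg] at this
    exact_mod_cast this
  -- lengths of slices
  have hT'len : T'.length = j - i := by
    rw [hT', List.length_take, List.length_drop]
    omega
  have hS'len : S'.length = k - l := by
    rw [hS', List.length_take, List.length_drop]
    omega
  have hT'mem : ∀ g ∈ T', ∑ m, g m = α := fun g hg =>
    sum_coords_gen d α c a ha (hL.1.1 g (List.mem_of_mem_drop (List.mem_of_mem_take hg)))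
  have hS'mem : ∀ g ∈ S', ∑ m, g m = α := fun g hg =>
    sum_coords_gen d α c a ha (hM.1.1 g (List.mem_of_mem_drop (List.mem_of_mem_take hg)))
  have hwsum : ∑ m, w m = (j - i) * α + (k - l) * α := by
    rw [hwdef]
    simp only [Pi.add_apply, Finset.sum_add_distrib]
    rw [sum_coords_list α T' hT'mem, sum_coords_list α S' hS'mem, hT'len, hS'len]
  have hw0 : w ≠ 0 := by
    intro h
    rw [h] at hwsum
    simp only [Pi.zero_apply, Finset.sum_const_zero] at hwsum
    have h1 : 0 < (j - i) * α := Nat.mul_pos (by omega) hα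
    omega
  have hwA : w ∈ Amon d α := mem_Amon_of_dvd_s13 α hα w hwdvd
  have hzB2 : pval x L j + (M.take l).sum ∈ Bmon d α c a :=
    add_mem hvB (AddSubmonoid.list_sum_mem _ (fun g hg =>
      AddSubmonoid.subset_closure (hM.1.1 g (List.mem_of_mem_take hg))))
  have : (pval x L j + (M.take l).sum) + w = y := by
    funext m
    have := hpt m
    have e3 := congrFun huy m
    simp only [Pi.add_apply] at e3 ⊢
    rw [hwdef]
    simp only [Pi.add_apply]
    omega
  exact hy.2 w hwA hw0 _ hzB2 this

/-- at a cross the equivalent partial values are distinct: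
`x(λ,i) ≠ y(ν,k)` and `x(λ,j) ≠ y(ν,l)`. -/
theorem cross_partial_values_ne (d α c : ℕ) (hd : 0 < d) (hα : 0 < α) (hc : 0 < c)
    (a : Fin c → Fin d → ℕ) (ha : ∀ i, ∑ j, a i j = α)
    (x y : Fin d → ℕ) (hx : x ∈ BAset d α c a) (hx0 : x ≠ 0)
    (hy : y ∈ BAset d α c a) (hy0 : y ≠ 0) (hxy : equivA α x y)
    (L : List (Fin d → ℕ)) (hL : L ∈ Lam d α c a x)
    (M : List (Fin d → ℕ)) (hM : M ∈ Lam d α c a y)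
    (i j l k : ℕ) (hcross : isCross α x y L M i j l k) :
    pval x L i ≠ pval y M k ∧ pval x L j ≠ pval y M l := by
  obtain ⟨hij, hj, hlk, hk, he1, he2⟩ := hcross
  constructor
  · intro heq
    exact cross_key d α c hα a ha x y hy L hL M hM i j l k hij hj hlk hk heq he2
  · intro heq
    exact cross_key d α c hα a ha y x hx M hM L hL l k i j hlk hk hij hj heq.symm
      (fun m => dvd_sub_comm.mp (he1 m))
end
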